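/- arXiv:2411.18590 — 8 statements merged into one kernel-verified Lean document; each statement's English description precedes it below -/
import Mathlib

section
/- Let φ be a 3CNF instance with variables x_1,…,x_n and clauses c_1,…,c_m, let G(φ) be its Garey–Johnson graph, let W = {v_ℓ : ℓ a literal of φ}, let f map each literal ℓ to v_ℓ, and let k = n + 2m. Then: (i) φ is satisfiable if and only if G(φ) has a vertex cover of size at most k; and (ii) {f(A) : A a satisfying literal set of φ} = {S ∩ W : S a vertex cover of G(φ) with |S| ≤ k}. -/
/-- A literal over `n` variables: a variable index together with a polarity
(`true` = positive literal `x_i`, `false` = negative literal `¬x_i`). -/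
abbrev Lit (n : ℕ) := Fin n × Bool

/-- `A` is a satisfying literal set of the 3CNF instance with clauses `C`:
it contains exactly one literal per variable and at least one literal of each clause. -/
def SatLitSet {n m : ℕ} (C : Fin m → Finset (Lit n)) (A : Finset (Lit n)) : Prop :=
  (∀ i : Fin n, Xor' ((i, true) ∈ A) ((i, false) ∈ A)) ∧ ∀ j : Fin m, ∃ ℓ ∈ C j, ℓ ∈ A

/-- Clause vertices of the Garey–Johnson graph: a pair of a clause index `j` and a
literal `ℓ ∈ c_j`. -/
abbrev CVert {n m : ℕ} (C : Fin m → Finset (Lit n)) := {p : Fin m × Lit n // p.2 ∈ C p.1}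

/-- Vertices of the Garey–Johnson graph: literal vertices `v_ℓ` and clause vertices `v^c_ℓ`. -/
abbrev GJVert {n m : ℕ} (C : Fin m → Finset (Lit n)) := Lit n ⊕ CVert C

/-- Adjacency of the Garey–Johnson graph: edges `{v_{x_i}, v_{¬x_i}}`, the triangle on
`{v^c_ℓ : ℓ ∈ c}` for every clause `c`, and `{v_ℓ, v^c_ℓ}` for every clause `c`, `ℓ ∈ c`. -/
def gjAdj {n m : ℕ} (C : Fin m → Finset (Lit n)) : GJVert C → GJVert C → Prop := fun u v =>
  (∃ (i : Fin n) (b : Bool), u = Sum.inl (i, b) ∧ v = Sum.inl (i, !b)) ∨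
  (∃ x y : CVert C, x.1.1 = y.1.1 ∧ x.1.2 ≠ y.1.2 ∧ u = Sum.inr x ∧ v = Sum.inr y) ∨
  (∃ x : CVert C, (u = Sum.inl x.1.2 ∧ v = Sum.inr x) ∨ (u = Sum.inr x ∧ v = Sum.inl x.1.2))

/-! A vertex cover of `G(φ)` contains `v_{x_i}` or `v_{¬x_i}` for every variable and at least two
vertices of every clause triangle, so it has at least `n + 2m` vertices. A cover of exactly that size
therefore contains exactly one literal vertex per variable and misses exactly one vertex `v^c_ℓ` of
each clause `c`; the edge `{v_ℓ, v^c_ℓ}` then puts `v_ℓ` into the cover, so the literal part of the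
cover is a satisfying literal set. Conversely, a satisfying literal set `A` together with all clause
vertices except one vertex `v^c_ℓ` with `ℓ ∈ A` per clause is a cover of size `n + 2m`. -/

open Finset

section BoolPairs

variable {α : Type*} {L : Finset (α × Bool)}

lemma injOn_fst_iff :
    Set.InjOn Prod.fst (L : Set (α × Bool)) ↔ ∀ i, ¬((i, true) ∈ L ∧ (i, false) ∈ L) := by
  constructor
  · rintro h i ⟨ht, hf⟩
    simpa using h ht hf rfl
  · rintro h ⟨i, b⟩ hb ⟨i', b'⟩ hb' (rfl : i = i')
    cases b <;> cases b' <;> simp_all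

variable [Fintype α] [DecidableEq α]

lemma image_fst_eq_univ_iff :
    L.image Prod.fst = univ ↔ ∀ i, (i, true) ∈ L ∨ (i, false) ∈ L := by
  simp only [eq_univ_iff_forall, mem_image, Prod.exists, exists_and_right, exists_eq_right,
    Bool.exists_bool, or_comm]

lemma card_le_card_of_forall_or (h : ∀ i, (i, true) ∈ L ∨ (i, false) ∈ L) :
    Fintype.card α ≤ #L := by
  rw [← card_univ, ← image_fst_eq_univ_iff.2 h]
  exact card_image_le

lemma forall_xor_iff_forall_or_and_card_le :
    (∀ i, Xor ((i, true) ∈ L) ((i, false) ∈ L)) ↔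
      (∀ i, (i, true) ∈ L ∨ (i, false) ∈ L) ∧ #L ≤ Fintype.card α := by
  simp only [xor_iff_or_and_not_and, forall_and, ← injOn_fst_iff]
  refine and_congr_right fun h => ?_
  rw [← card_image_iff, ← card_univ, ← image_fst_eq_univ_iff.2 h]
  exact ⟨fun h' => h'.ge, fun h' => le_antisymm card_image_le h'⟩

end BoolPairs

lemma Finset.inter_image_inl_univ {α β : Type*} [Fintype α] [DecidableEq α] [DecidableEq β]
    (S : Finset (α ⊕ β)) : S ∩ univ.image Sum.inl = S.toLeft.image Sum.inl := by
  ext (a | b) <;> simp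

section GareyJohnson

variable {n m : ℕ} {C : Fin m → Finset (Lit n)}

lemma card_cVert : Fintype.card (CVert C) = ∑ j, #(C j) := by
  rw [Fintype.card_congr (Equiv.subtypeProdEquivSigmaSubtype fun j ℓ => ℓ ∈ C j),
    Fintype.card_sigma]
  simp

variable {G : SimpleGraph (GJVert C)}

lemma isVertexCover_disjSum_iff (hG : ∀ u v, G.Adj u v ↔ gjAdj C u v)
    {L : Finset (Lit n)} {R : Finset (CVert C)} :
    G.IsVertexCover (L.disjSum R : Set (GJVert C)) ↔
      (∀ i, (i, true) ∈ L ∨ (i, false) ∈ L) ∧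
      (∀ x y : CVert C, x.1.1 = y.1.1 → x ≠ y → x ∈ R ∨ y ∈ R) ∧
      ∀ x : CVert C, x.1.2 ∈ L ∨ x ∈ R := by
  simp only [SimpleGraph.IsVertexCover, hG, gjAdj]
  constructor
  · intro h
    refine ⟨fun i => ?_, fun x y hxy hne => ?_, fun x => ?_⟩
    · simpa using @h (.inl (i, true)) (.inl (i, false)) (.inl ⟨i, true, rfl, rfl⟩)
    · have hlit : x.1.2 ≠ y.1.2 := fun h' => hne (Subtype.ext (Prod.ext hxy h'))
      simpa using @h (.inr x) (.inr y) (.inr (.inl ⟨x, y, hxy, hlit, rfl, rfl⟩))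
    · simpa using @h (.inl x.1.2) (.inr x) (.inr (.inr ⟨x, .inl ⟨rfl, rfl⟩⟩))
  · rintro ⟨hvar, htri, hedge⟩ u v
      (⟨i, b, rfl, rfl⟩ | ⟨x, y, hxy, hne, rfl, rfl⟩ | ⟨x, ⟨rfl, rfl⟩ | ⟨rfl, rfl⟩⟩)
    · cases b <;> simpa [or_comm] using hvar i
    · simpa using htri x y hxy (by rintro rfl; exact hne rfl)
    · simpa using hedge x
    · simpa [or_comm] using hedge x

lemma exists_isVertexCover_disjSum_of_satLitSet (hG : ∀ u v, G.Adj u v ↔ gjAdj C u v)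
    (hC : ∀ j, #(C j) ≤ 3) {A : Finset (Lit n)} (hA : SatLitSet C A) :
    ∃ R : Finset (CVert C),
      G.IsVertexCover (A.disjSum R : Set (GJVert C)) ∧ #A + #R ≤ n + 2 * m := by
  obtain ⟨hxor, hclause⟩ := hA
  obtain ⟨hvar, hAcard⟩ := forall_xor_iff_forall_or_and_card_le.1 hxor
  choose w hwC hwA using hclause
  set K : Finset (CVert C) := univ.image fun j => ⟨(j, w j), hwC j⟩
  have hK : ∀ x : CVert C, x ∈ K ↔ x.1.2 = w x.1.1 := by
    rintro ⟨⟨j, ℓ⟩, hℓ⟩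
    simp [K, eq_comm]
  have hKcard : #K = m :=
    (card_image_of_injective _ fun j j' h => congrArg (fun x : CVert C => x.1.1) h).trans
      (card_fin m)
  refine ⟨Kᶜ, (isVertexCover_disjSum_iff hG).2 ⟨hvar, fun x y hxy hne => ?_, fun x => ?_⟩, ?_⟩
  · simp only [mem_compl, hK]
    by_contra! h
    exact hne (Subtype.ext (Prod.ext hxy (h.1.trans (hxy ▸ h.2.symm))))
  · by_cases hx : x ∈ K
    · exact .inl ((hK x).1 hx ▸ hwA _)
    · exact .inr (mem_compl.2 hx)
  · have h3m : ∑ j, #(C j) ≤ 3 * m := by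
      simpa [mul_comm] using sum_le_card_nsmul univ _ 3 fun j _ => hC j
    rw [card_compl, card_cVert, hKcard]
    rw [Fintype.card_fin] at hAcard
    omega

lemma satLitSet_of_isVertexCover_disjSum (hG : ∀ u v, G.Adj u v ↔ gjAdj C u v)
    (hC : ∀ j, 3 ≤ #(C j)) {L : Finset (Lit n)} {R : Finset (CVert C)}
    (hS : G.IsVertexCover (L.disjSum R : Set (GJVert C))) (hcard : #L + #R ≤ n + 2 * m) :
    SatLitSet C L := by
  obtain ⟨hvar, htri, hedge⟩ := (isVertexCover_disjSum_iff hG).1 hS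
  -- A cover of a triangle misses at most one of its vertices.
  have hinj : Set.InjOn (fun x : CVert C => x.1.1) (Rᶜ : Finset (CVert C)) := by
    intro x hx y hy hxy
    by_contra hne
    simp only [coe_compl, Set.mem_compl_iff, mem_coe] at hx hy
    exact (htri x y hxy hne).elim hx hy
  have hRc : #Rᶜ ≤ m := by
    simpa using card_le_card_of_injOn _ (fun _ _ => mem_univ _) hinj
  have hL : n ≤ #L := by simpa using card_le_card_of_forall_or hvar
  have h3m : 3 * m ≤ ∑ j, #(C j) := by
    simpa [mul_comm] using card_nsmul_le_sum univ _ 3 fun j _ => hC j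
  have hR : #R + #Rᶜ = ∑ j, #(C j) := by rw [card_add_card_compl, card_cVert]
  refine ⟨forall_xor_iff_forall_or_and_card_le.2 ⟨hvar, by rw [Fintype.card_fin]; omega⟩,
    fun j => ?_⟩
  have himage : Rᶜ.image (fun x : CVert C => x.1.1) = univ :=
    eq_univ_of_card _ (by rw [card_image_of_injOn hinj, Fintype.card_fin]; omega)
  obtain ⟨x, hx, rfl⟩ := mem_image.1 (himage ▸ mem_univ j)
  exact ⟨x.1.2, x.2, (hedge x).resolve_right (mem_compl.1 hx)⟩

end GareyJohnson

/-- the Garey–Johnson reduction from 3SAT to Vertex Cover, with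
`W = {v_ℓ : ℓ a literal}`, `f = Sum.inl` and `k = n + 2m`:
(i) `φ` is satisfiable iff `G(φ)` has a vertex cover of size at most `k`, and
(ii) `{f(A) : A satisfying} = {S ∩ W : S a vertex cover of size ≤ k}`. -/
theorem stmt_2 {n m : ℕ} (C : Fin m → Finset (Lit n)) (hC : ∀ j, (C j).card = 3)
    (G : SimpleGraph (GJVert C)) (hG : ∀ u v, G.Adj u v ↔ gjAdj C u v) :
    ((∃ A, SatLitSet C A) ↔
      (∃ S : Finset (GJVert C), S.card ≤ n + 2 * m ∧ ∀ u v, G.Adj u v → u ∈ S ∨ v ∈ S)) ∧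
    {T : Finset (GJVert C) | ∃ A, SatLitSet C A ∧ T = A.image (Sum.inl : Lit n → GJVert C)}
      = {T : Finset (GJVert C) | ∃ S : Finset (GJVert C),
          (∀ u v, G.Adj u v → u ∈ S ∨ v ∈ S) ∧ S.card ≤ n + 2 * m ∧
          T = S ∩ (Finset.univ : Finset (Lit n)).image (Sum.inl : Lit n → GJVert C)} := by
  have hsets : {T : Finset (GJVert C) | ∃ A, SatLitSet C A ∧ T = A.image Sum.inl}
      = {T | ∃ S : Finset (GJVert C), (∀ u v, G.Adj u v → u ∈ S ∨ v ∈ S) ∧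
          S.card ≤ n + 2 * m ∧ T = S ∩ univ.image Sum.inl} := by
    ext T
    constructor
    · rintro ⟨A, hA, rfl⟩
      obtain ⟨R, hS, hcard⟩ :=
        exists_isVertexCover_disjSum_of_satLitSet hG (fun j => (hC j).le) hA
      exact ⟨A.disjSum R, fun u v => @hS u v, by rwa [card_disjSum],
        by rw [inter_image_inl_univ, toLeft_disjSum]⟩
    · rintro ⟨S, hS, hcard, rfl⟩
      rw [← toLeft_disjSum_toRight (u := S)] at hS hcard
      refine ⟨S.toLeft, ?_, inter_image_inl_univ S⟩
      exact satLitSet_of_isVertexCover_disjSum hG (fun j => (hC j).ge) (fun u v => hS u v)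
        (by rwa [card_disjSum] at hcard)
  refine ⟨⟨fun ⟨A, hA⟩ => ?_, fun ⟨S, hcard, hS⟩ => ?_⟩, hsets⟩
  · obtain ⟨S, hS, hcard, -⟩ := (Set.ext_iff.1 hsets _).1 ⟨A, hA, rfl⟩
    exact ⟨S, hcard, hS⟩
  · obtain ⟨A, hA, -⟩ := (Set.ext_iff.1 hsets _).2 ⟨S, hS, hcard, rfl⟩
    exact ⟨A, hA⟩
end

section
/- Let φ be a 3CNF instance with variables x_1,…,x_n and clauses c_1,…,c_m, let L_b be a set of literals of φ closed under negation (ℓ ∈ L_b iff ¬ℓ ∈ L_b) with |L_b| = 2b, and set β = 2n + 3m. Let G'(L_b, β) be the graph obtained from the Garey–Johnson graph G(φ) by, for each variable x with x, ¬x ∈ L_b, adding fresh vertices v_{x^1},…,v_{x^β} and v_{¬x^1},…,v_{¬x^β} and all edges between V_x = {v_x, v_{x^1},…,v_{x^β}} and V_{¬x} = {v_{¬x}, v_{¬x^1},…,v_{¬x^β}} (so V_x ∪ V_{¬x} induces a complete bipartite graph K_{β+1,β+1}). Let k' = (β+1)·b + (n − b) + 2m and let W_b = {v_ℓ : ℓ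 ∈ L_b}. Then for all vertex covers S_1, S_2 of G'(L_b, β) with |S_1| ≤ k' and |S_2| ≤ k': S_1 ∩ W_b = S_2 ∩ W_b if and only if |S_1 △ S_2| ≤ β, where △ denotes symmetric difference. -/
/-- Vertices of the blow-up graph `G'(L_b, β)` with `β = 2n + 3m`: the Garey–Johnson vertices
together with fresh blow-up vertices `v_{ℓ^1}, …, v_{ℓ^β}` for each literal `ℓ` whose
variable lies in `Xb` (i.e. `ℓ ∈ L_b`). -/
abbrev BUVert {n m : ℕ} (C : Fin m → Finset (Lit n)) (Xb : Finset (Fin n)) :=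
  GJVert C ⊕ {q : Lit n × Fin (2 * n + 3 * m) // q.1.1 ∈ Xb}

/-- Adjacency of `G'(L_b, β)`: the Garey–Johnson edges together with all edges between
`V_x = {v_x, v_{x^1}, …, v_{x^β}}` and `V_{¬x} = {v_{¬x}, v_{¬x^1}, …, v_{¬x^β}}`
for every variable `x ∈ Xb` (a complete bipartite graph `K_{β+1,β+1}`). -/
def buAdj {n m : ℕ} (C : Fin m → Finset (Lit n)) (Xb : Finset (Fin n)) :
    BUVert C Xb → BUVert C Xb → Prop := fun u v =>
  (∃ u' v', gjAdj C u' v' ∧ u = Sum.inl u' ∧ v = Sum.inl v') ∨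
  (∃ (i : Fin n) (b : Bool) (hi : i ∈ Xb) (j : Fin (2 * n + 3 * m)),
      (u = Sum.inl (Sum.inl (i, b)) ∧ v = Sum.inr ⟨((i, !b), j), hi⟩) ∨
      (u = Sum.inr ⟨((i, !b), j), hi⟩ ∧ v = Sum.inl (Sum.inl (i, b)))) ∨
  (∃ (i : Fin n) (b : Bool) (hi : i ∈ Xb) (j j' : Fin (2 * n + 3 * m)),
      u = Sum.inr ⟨((i, b), j), hi⟩ ∧ v = Sum.inr ⟨((i, !b), j'), hi⟩)

namespace Stmt3

variable {n m : ℕ} {C : Fin m → Finset (Lit n)} {Xb : Finset (Fin n)}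

/-- classify each vertex by its variable or its clause. -/
def vclass : BUVert C Xb → Fin n ⊕ Fin m
  | .inl (.inl ℓ) => .inl ℓ.1
  | .inl (.inr x) => .inr x.1.1
  | .inr q => .inl q.1.1.1

/-- one side of the blow-up bipartite block of variable `i`. -/
def side {i : Fin n} (hi : i ∈ Xb) (c : Bool) : Finset (BUVert C Xb) :=
  insert (Sum.inl (Sum.inl (i, c)))
    ((Finset.univ : Finset (Fin (2 * n + 3 * m))).image
      fun j => Sum.inr ⟨((i, c), j), hi⟩)

lemma side_card {i : Fin n} (hi : i ∈ Xb) (c : Bool) :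
    (side (C := C) hi c).card = 2 * n + 3 * m + 1 := by
  rw [side, Finset.card_insert_of_notMem (by simp), Finset.card_image_of_injective]
  · simp
  · intro a b hab
    simpa using hab

lemma vclass_side {i : Fin n} (hi : i ∈ Xb) (c : Bool) {v : BUVert C Xb}
    (hv : v ∈ side (C := C) hi c) : vclass v = Sum.inl i := by
  simp only [side, Finset.mem_insert, Finset.mem_image, Finset.mem_univ, true_and] at hv
  rcases hv with rfl | ⟨j, rfl⟩ <;> rfl

lemma base_mem_side {i : Fin n} (hi : i ∈ Xb) {c c' : Bool}
    (h : (Sum.inl (Sum.inl (i, c')) : BUVert C Xb) ∈ side (C := C) hi c) : c' = c := by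
  simp only [side, Finset.mem_insert, Finset.mem_image, Finset.mem_univ, true_and] at h
  rcases h with h | ⟨j, h⟩ <;> simp_all

lemma side_disj {i : Fin n} (hi : i ∈ Xb) {c c' : Bool} (h : c ≠ c') {v : BUVert C Xb}
    (hv : v ∈ side (C := C) hi c) (hv' : v ∈ side (C := C) hi c') : False := by
  simp only [side, Finset.mem_insert, Finset.mem_image, Finset.mem_univ, true_and] at hv hv'
  rcases hv with rfl | ⟨j, rfl⟩ <;> rcases hv' with h' | ⟨j', h'⟩ <;> simp_all


lemma vclass_eq_inl {v : BUVert C Xb} {i : Fin n} (h : vclass v = Sum.inl i) :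
    (∃ c : Bool, v = Sum.inl (Sum.inl (i, c))) ∨
    (∃ (c : Bool) (hi : i ∈ Xb) (j : Fin (2 * n + 3 * m)), v = Sum.inr ⟨((i, c), j), hi⟩) := by
  match v with
  | .inl (.inl ⟨i', c⟩) =>
    simp only [vclass, Sum.inl.injEq] at h
    exact Or.inl ⟨c, by rw [h]⟩
  | .inl (.inr x) => simp [vclass] at h
  | .inr ⟨((i', c), j), hi⟩ =>
    simp only [vclass, Sum.inl.injEq] at h
    subst h
    exact Or.inr ⟨c, hi, j, rfl⟩

lemma vclass_eq_inr {v : BUVert C Xb} {j : Fin m} (h : vclass v = Sum.inr j) :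
    ∃ x : CVert C, x.1.1 = j ∧ v = Sum.inl (Sum.inr x) := by
  match v with
  | .inl (.inl ⟨i', c⟩) => simp [vclass] at h
  | .inl (.inr x) =>
    simp only [vclass, Sum.inr.injEq] at h
    exact ⟨x, h, rfl⟩
  | .inr q => simp [vclass] at h

variable {G' : SimpleGraph (BUVert C Xb)}

lemma adj_cross (hG' : ∀ u v, G'.Adj u v ↔ buAdj C Xb u v) {i : Fin n} (hi : i ∈ Xb) (c : Bool)
    {u v : BUVert C Xb} (hu : u ∈ side (C := C) hi c) (hv : v ∈ side (C := C) hi (!c)) :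
    G'.Adj u v := by
  rw [hG']
  simp only [side, Finset.mem_insert, Finset.mem_image, Finset.mem_univ, true_and] at hu hv
  rcases hu with rfl | ⟨j, rfl⟩ <;> rcases hv with rfl | ⟨j', rfl⟩
  · exact Or.inl ⟨_, _, Or.inl ⟨i, c, rfl, rfl⟩, rfl, rfl⟩
  · exact Or.inr (Or.inl ⟨i, c, hi, j', Or.inl ⟨rfl, rfl⟩⟩)
  · exact Or.inr (Or.inl ⟨i, !c, hi, j, Or.inr ⟨by rw [Bool.not_not], rfl⟩⟩)
  · exact Or.inr (Or.inr ⟨i, c, hi, j, j', rfl, rfl⟩)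

lemma adj_base (hG' : ∀ u v, G'.Adj u v ↔ buAdj C Xb u v) (i : Fin n) (c : Bool) :
    G'.Adj (Sum.inl (Sum.inl (i, c))) (Sum.inl (Sum.inl (i, !c))) := by
  rw [hG']
  exact Or.inl ⟨_, _, Or.inl ⟨i, c, rfl, rfl⟩, rfl, rfl⟩

lemma adj_clause (hG' : ∀ u v, G'.Adj u v ↔ buAdj C Xb u v) {x y : CVert C}
    (h1 : x.1.1 = y.1.1) (h2 : x.1.2 ≠ y.1.2) :
    G'.Adj (Sum.inl (Sum.inr x)) (Sum.inl (Sum.inr y)) := by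
  rw [hG']
  exact Or.inl ⟨_, _, Or.inr (Or.inl ⟨x, y, h1, h2, rfl, rfl⟩), rfl, rfl⟩


/-- target cardinality of each fiber of a tight vertex cover. -/
def wt (Xb : Finset (Fin n)) : Fin n ⊕ Fin m → ℕ
  | .inl i => if i ∈ Xb then 2 * n + 3 * m + 1 else 1
  | .inr _ => 2

lemma wt_sum {b : ℕ} (hXb : Xb.card = b) :
    ∑ a : Fin n ⊕ Fin m, wt Xb a = (2 * n + 3 * m + 1) * b + (n - b) + 2 * m := by
  have hb : b ≤ n := by
    have := Finset.card_le_card (Finset.subset_univ Xb)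
    simpa [hXb] using this
  rw [Fintype.sum_sum_type]
  have h1 : ∀ i : Fin n, wt (m := m) Xb (.inl i) = (if i ∈ Xb then 2 * n + 3 * m else 0) + 1 := by
    intro i; by_cases h : i ∈ Xb <;> simp [wt, h]
  have h2 : ∑ i : Fin n, wt (m := m) Xb (.inl i) = (2 * n + 3 * m) * b + n := by
    simp only [h1, Finset.sum_add_distrib, Finset.sum_const, Finset.card_univ,
      Fintype.card_fin, smul_eq_mul, mul_one]
    rw [Finset.sum_ite_mem, Finset.univ_inter, Finset.sum_const, hXb, smul_eq_mul, mul_comm]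
  have h3 : ∑ _j : Fin m, wt (n := n) Xb (.inr _j) = 2 * m := by
    simp [wt, Finset.sum_const, mul_comm]
  rw [h2, h3]
  have : (2 * n + 3 * m + 1) * b = (2 * n + 3 * m) * b + b := by ring
  rw [this]
  omega

theorem cover_struct (hC : ∀ j, (C j).card = 3) {b : ℕ} (hXb : Xb.card = b)
    (hG' : ∀ u v, G'.Adj u v ↔ buAdj C Xb u v)
    {S : Finset (BUVert C Xb)}
    (h : ∀ u v, G'.Adj u v → u ∈ S ∨ v ∈ S)
    (hc : S.card ≤ (2 * n + 3 * m + 1) * b + (n - b) + 2 * m) :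
    (∀ (i : Fin n) (hi : i ∈ Xb),
        ∃ c, S.filter (fun v => vclass v = Sum.inl i) = side (C := C) hi c) ∧
    (∀ a, (S.filter fun v => vclass v = a).card = wt Xb a) := by
  have hsideS : ∀ (i : Fin n) (hi : i ∈ Xb), ∃ c, side (C := C) hi c ⊆ S := by
    intro i hi
    by_cases hss : side (C := C) hi true ⊆ S
    · exact ⟨true, hss⟩
    · refine ⟨false, ?_⟩
      rw [Finset.not_subset] at hss
      obtain ⟨u, hu, huS⟩ := hss
      intro v hv
      rcases h u v (adj_cross hG' hi true hu hv) with h' | h'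
      · exact absurd h' huS
      · exact h'
  have hlow : ∀ a, wt Xb a ≤ (S.filter fun v => vclass v = a).card := by
    intro a
    match a with
    | .inl i =>
      by_cases hi : i ∈ Xb
      · obtain ⟨c, hsc⟩ := hsideS i hi
        have hsub : side (C := C) hi c ⊆ S.filter fun v => vclass v = Sum.inl i :=
          fun v hv => Finset.mem_filter.2 ⟨hsc hv, vclass_side hi c hv⟩
        calc wt Xb (.inl i) = (side (C := C) hi c).card := by simp [wt, hi, side_card]
          _ ≤ _ := Finset.card_le_card hsub
      · have hwt : wt (m := m) Xb (.inl i) = 1 := by simp [wt, hi]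
        rw [hwt, Nat.one_le_iff_ne_zero, ← Nat.pos_iff_ne_zero, Finset.card_pos]
        rcases h _ _ (adj_base hG' i true) with h' | h'
        · exact ⟨_, Finset.mem_filter.2 ⟨h', rfl⟩⟩
        · exact ⟨_, Finset.mem_filter.2 ⟨h', rfl⟩⟩
    | .inr j =>
      obtain ⟨ℓ₁, ℓ₂, ℓ₃, h12, h13, h23, hCj⟩ := Finset.card_eq_three.1 (hC j)
      have m1 : ℓ₁ ∈ C j := by rw [hCj]; simp
      have m2 : ℓ₂ ∈ C j := by rw [hCj]; simp
      have m3 : ℓ₃ ∈ C j := by rw [hCj]; simp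
      set x₁ : CVert C := ⟨(j, ℓ₁), m1⟩ with hx1
      set x₂ : CVert C := ⟨(j, ℓ₂), m2⟩ with hx2
      set x₃ : CVert C := ⟨(j, ℓ₃), m3⟩ with hx3
      have mem : ∀ x : CVert C, x.1.1 = j → (Sum.inl (Sum.inr x) : BUVert C Xb) ∈ S →
          (Sum.inl (Sum.inr x) : BUVert C Xb) ∈ S.filter fun v => vclass v = Sum.inr j := by
        intro x hx hxS
        exact Finset.mem_filter.2 ⟨hxS, by simp [vclass, hx]⟩
      have ne12 : (Sum.inl (Sum.inr x₁) : BUVert C Xb) ≠ Sum.inl (Sum.inr x₂) := by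
        simp [hx1, hx2, h12]
      have ne13 : (Sum.inl (Sum.inr x₁) : BUVert C Xb) ≠ Sum.inl (Sum.inr x₃) := by
        simp [hx1, hx3, h13]
      have ne23 : (Sum.inl (Sum.inr x₂) : BUVert C Xb) ≠ Sum.inl (Sum.inr x₃) := by
        simp [hx2, hx3, h23]
      show 2 ≤ _
      rw [← Nat.lt_iff_add_one_le, Finset.one_lt_card]
      by_cases hin : (Sum.inl (Sum.inr x₁) : BUVert C Xb) ∈ S
      · rcases h _ _ (adj_clause hG' (x := x₂) (y := x₃) rfl h23) with h' | h'
        · exact ⟨_, mem x₁ rfl hin, _, mem x₂ rfl h', ne12⟩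
        · exact ⟨_, mem x₁ rfl hin, _, mem x₃ rfl h', ne13⟩
      · have h2' := (h _ _ (adj_clause hG' (x := x₁) (y := x₂) rfl h12)).resolve_left hin
        have h3' := (h _ _ (adj_clause hG' (x := x₁) (y := x₃) rfl h13)).resolve_left hin
        exact ⟨_, mem x₂ rfl h2', _, mem x₃ rfl h3', ne23⟩
  have hcardsum : S.card = ∑ a : Fin n ⊕ Fin m, (S.filter fun v => vclass v = a).card :=
    Finset.card_eq_sum_card_fiberwise (fun x _ => Finset.mem_univ _)
  have hwsum := wt_sum (m := m) hXb
  have hfib : ∀ a, (S.filter fun v => vclass v = a).card = wt Xb a := by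
    by_contra hcon
    push_neg at hcon
    obtain ⟨a, ha⟩ := hcon
    have hlt : wt Xb a < (S.filter fun v => vclass v = a).card :=
      lt_of_le_of_ne (hlow a) (Ne.symm ha)
    have hstrict := Finset.sum_lt_sum (fun i _ => hlow i)
      ⟨a, Finset.mem_univ a, hlt⟩
    omega
  refine ⟨?_, hfib⟩
  intro i hi
  obtain ⟨c, hsc⟩ := hsideS i hi
  have hsub : side (C := C) hi c ⊆ S.filter fun v => vclass v = Sum.inl i :=
    fun v hv => Finset.mem_filter.2 ⟨hsc hv, vclass_side hi c hv⟩
  exact ⟨c, (Finset.eq_of_subset_of_card_le hsub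
    (by rw [hfib]; simp [wt, hi, side_card])).symm⟩


lemma filter_symmDiff (p : BUVert C Xb → Prop) [DecidablePred p] (A B : Finset (BUVert C Xb)) :
    (symmDiff A B).filter p = symmDiff (A.filter p) (B.filter p) := by
  ext v
  simp only [Finset.mem_symmDiff, Finset.mem_filter]
  tauto

lemma card_symmDiff_le (A B : Finset (BUVert C Xb)) :
    (symmDiff A B).card ≤ A.card + B.card := by
  rw [symmDiff_def, Finset.sup_eq_union]
  exact (Finset.card_union_le _ _).trans
    (add_le_add (Finset.card_le_card (Finset.sdiff_subset)) (Finset.card_le_card (Finset.sdiff_subset)))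

def wt' (Xb : Finset (Fin n)) : Fin n ⊕ Fin m → ℕ
  | .inl i => if i ∈ Xb then 0 else 2
  | .inr _ => 2

lemma wt'_sum {b : ℕ} (hXb : Xb.card = b) :
    ∑ a : Fin n ⊕ Fin m, wt' Xb a ≤ 2 * n + 3 * m := by
  rw [Fintype.sum_sum_type]
  have h1 : ∀ i : Fin n, wt' (m := m) Xb (.inl i) = (if i ∈ Xbᶜ then 2 else 0) := by
    intro i; by_cases h : i ∈ Xb <;> simp [wt', h]
  have h2 : ∑ i : Fin n, wt' (m := m) Xb (.inl i) = (n - b) * 2 := by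
    simp only [h1]
    rw [Finset.sum_ite_mem, Finset.univ_inter, Finset.sum_const, smul_eq_mul,
      Finset.card_compl, Fintype.card_fin, hXb]
  have h3 : ∑ _j : Fin m, wt' (n := n) Xb (.inr _j) = 2 * m := by
    simp [wt', Finset.sum_const, mul_comm]
  rw [h2, h3]
  omega

end Stmt3

/-- for the blow-up Garey–Johnson graph `G'(L_b, β)` with `β = 2n + 3m`,
`|L_b| = 2b` (here `L_b` is the set of literals over the variable set `Xb` with `|Xb| = b`),
`k' = (β+1)·b + (n−b) + 2m` and `W_b = {v_ℓ : ℓ ∈ L_b}`: any two vertex covers `S₁, S₂` of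
size at most `k'` agree on `W_b` iff `|S₁ ∆ S₂| ≤ β`. -/
theorem stmt_3 {n m b : ℕ} (C : Fin m → Finset (Lit n)) (hC : ∀ j, (C j).card = 3)
    (Xb : Finset (Fin n)) (hXb : Xb.card = b)
    (G' : SimpleGraph (BUVert C Xb)) (hG' : ∀ u v, G'.Adj u v ↔ buAdj C Xb u v)
    (S₁ S₂ : Finset (BUVert C Xb))
    (h₁ : ∀ u v, G'.Adj u v → u ∈ S₁ ∨ v ∈ S₁)
    (h₂ : ∀ u v, G'.Adj u v → u ∈ S₂ ∨ v ∈ S₂)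
    (hc₁ : S₁.card ≤ (2 * n + 3 * m + 1) * b + (n - b) + 2 * m)
    (hc₂ : S₂.card ≤ (2 * n + 3 * m + 1) * b + (n - b) + 2 * m) :
    S₁ ∩ (Xb ×ˢ (Finset.univ : Finset Bool)).image
        (fun ℓ => (Sum.inl (Sum.inl ℓ) : BUVert C Xb))
      = S₂ ∩ (Xb ×ˢ (Finset.univ : Finset Bool)).image
        (fun ℓ => (Sum.inl (Sum.inl ℓ) : BUVert C Xb))
      ↔ (symmDiff S₁ S₂).card ≤ 2 * n + 3 * m := by
  obtain ⟨hside₁, hfib₁⟩ := Stmt3.cover_struct hC hXb hG' h₁ hc₁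
  obtain ⟨hside₂, hfib₂⟩ := Stmt3.cover_struct hC hXb hG' h₂ hc₂
  choose c₁ hcf₁ using hside₁
  choose c₂ hcf₂ using hside₂
  set W := (Xb ×ˢ (Finset.univ : Finset Bool)).image
      (fun ℓ => (Sum.inl (Sum.inl ℓ) : BUVert C Xb)) with hW
  have hmemW : ∀ v : BUVert C Xb, v ∈ W ↔
      ∃ (i : Fin n) (c : Bool), i ∈ Xb ∧ v = Sum.inl (Sum.inl (i, c)) := by
    intro v
    simp only [hW, Finset.mem_image, Finset.mem_product, Finset.mem_univ, and_true,
      Prod.exists]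
    constructor
    · rintro ⟨i, c, hi, rfl⟩; exact ⟨i, c, hi, rfl⟩
    · rintro ⟨i, c, hi, rfl⟩; exact ⟨i, c, hi, rfl⟩
  have hbase : ∀ (S : Finset (BUVert C Xb))
      (cS : ∀ i, i ∈ Xb → Bool)
      (hcfS : ∀ (i : Fin n) (hi : i ∈ Xb),
        S.filter (fun v => Stmt3.vclass v = Sum.inl i) = Stmt3.side (C := C) hi (cS i hi))
      (i : Fin n) (hi : i ∈ Xb) (c : Bool),
      ((Sum.inl (Sum.inl (i, c)) : BUVert C Xb) ∈ S ↔ c = cS i hi) := by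
    intro S cS hcfS i hi c
    constructor
    · intro hv
      have hmem : (Sum.inl (Sum.inl (i, c)) : BUVert C Xb)
          ∈ S.filter (fun v => Stmt3.vclass v = Sum.inl i) :=
        Finset.mem_filter.2 ⟨hv, rfl⟩
      rw [hcfS i hi] at hmem
      exact Stmt3.base_mem_side hi hmem
    · rintro rfl
      have hmem : (Sum.inl (Sum.inl (i, cS i hi)) : BUVert C Xb)
          ∈ Stmt3.side (C := C) hi (cS i hi) := by simp [Stmt3.side]
      rw [← hcfS i hi] at hmem
      exact (Finset.mem_filter.1 hmem).1
  have key : (S₁ ∩ W = S₂ ∩ W) ↔ ∀ (i : Fin n) (hi : i ∈ Xb), c₁ i hi = c₂ i hi := by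
    constructor
    · intro hag i hi
      have hv1 : (Sum.inl (Sum.inl (i, c₁ i hi)) : BUVert C Xb) ∈ S₁ ∩ W :=
        Finset.mem_inter.2 ⟨(hbase S₁ c₁ hcf₁ i hi _).2 rfl,
          (hmemW _).2 ⟨i, c₁ i hi, hi, rfl⟩⟩
      rw [hag] at hv1
      exact (hbase S₂ c₂ hcf₂ i hi _).1 (Finset.mem_inter.1 hv1).1
    · intro hcc
      ext v
      simp only [Finset.mem_inter]
      constructor
      · rintro ⟨hvS, hvW⟩
        refine ⟨?_, hvW⟩
        obtain ⟨i, c, hi, rfl⟩ := (hmemW v).1 hvW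
        rw [hbase S₁ c₁ hcf₁ i hi c] at hvS
        rw [hbase S₂ c₂ hcf₂ i hi c, hvS, hcc i hi]
      · rintro ⟨hvS, hvW⟩
        refine ⟨?_, hvW⟩
        obtain ⟨i, c, hi, rfl⟩ := (hmemW v).1 hvW
        rw [hbase S₂ c₂ hcf₂ i hi c] at hvS
        rw [hbase S₁ c₁ hcf₁ i hi c, hvS, hcc i hi]
  rw [key]
  constructor
  · -- agreement implies small symmetric difference
    intro hcc
    have hsd : (symmDiff S₁ S₂).card
        = ∑ a : Fin n ⊕ Fin m,
            ((symmDiff S₁ S₂).filter fun v => Stmt3.vclass v = a).card :=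
      Finset.card_eq_sum_card_fiberwise (fun x _ => Finset.mem_univ _)
    have hbound : ∀ a : Fin n ⊕ Fin m,
        ((symmDiff S₁ S₂).filter fun v => Stmt3.vclass v = a).card ≤ Stmt3.wt' Xb a := by
      intro a
      rw [Stmt3.filter_symmDiff]
      match a with
      | .inl i =>
        by_cases hi : i ∈ Xb
        · have : S₁.filter (fun v => Stmt3.vclass v = Sum.inl i)
              = S₂.filter (fun v => Stmt3.vclass v = Sum.inl i) := by
            rw [hcf₁ i hi, hcf₂ i hi, hcc i hi]
          rw [this, symmDiff_self]
          simp [Stmt3.wt', hi]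
        · have h1 : (S₁.filter fun v => Stmt3.vclass v = Sum.inl i).card = 1 := by
            rw [hfib₁]; simp [Stmt3.wt, hi]
          have h2 : (S₂.filter fun v => Stmt3.vclass v = Sum.inl i).card = 1 := by
            rw [hfib₂]; simp [Stmt3.wt, hi]
          have := Stmt3.card_symmDiff_le (S₁.filter fun v => Stmt3.vclass v = Sum.inl i)
            (S₂.filter fun v => Stmt3.vclass v = Sum.inl i)
          have hwt : Stmt3.wt' (m := m) Xb (.inl i) = 2 := by simp [Stmt3.wt', hi]
          rw [hwt]
          omega
      | .inr j =>
        set A := S₁.filter fun v => Stmt3.vclass v = Sum.inr j with hA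
        set B := S₂.filter fun v => Stmt3.vclass v = Sum.inr j with hB
        have hAc : A.card = 2 := by rw [hA, hfib₁]; rfl
        have hBc : B.card = 2 := by rw [hB, hfib₂]; rfl
        set F := (C j).attach.image
          (fun ℓ => (Sum.inl (Sum.inr ⟨(j, ℓ.1), ℓ.2⟩) : BUVert C Xb)) with hF
        have hFc : F.card ≤ 3 := by
          rw [hF]
          exact (Finset.card_image_le).trans (by simp [hC j])
        have hsubF : ∀ (S : Finset (BUVert C Xb)),
            (S.filter fun v => Stmt3.vclass v = Sum.inr j) ⊆ F := by
          intro S v hv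
          obtain ⟨hvS, hvc⟩ := Finset.mem_filter.1 hv
          obtain ⟨x, hxj, rfl⟩ := Stmt3.vclass_eq_inr hvc
          subst hxj
          rw [hF]
          refine Finset.mem_image.2 ⟨⟨x.1.2, x.2⟩, Finset.mem_attach _ _, ?_⟩
          exact congrArg _ (congrArg _ (Subtype.ext (Prod.mk.eta)))
        have hU : (A ∪ B).card ≤ 3 :=
          le_trans (Finset.card_le_card (Finset.union_subset (hsubF S₁) (hsubF S₂))) hFc
        have e1 : (A ∩ B).card + (A \ B).card = A.card := Finset.card_inter_add_card_sdiff A B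
        have e2 : (B ∩ A).card + (B \ A).card = B.card := Finset.card_inter_add_card_sdiff B A
        have e3 : (A ∪ B).card + (A ∩ B).card = A.card + B.card :=
          Finset.card_union_add_card_inter A B
        rw [Finset.inter_comm] at e2
        have e5 : (symmDiff A B).card ≤ (A \ B).card + (B \ A).card := by
          rw [symmDiff_def, Finset.sup_eq_union]
          exact Finset.card_union_le _ _
        have : Stmt3.wt' (n := n) Xb (.inr j) = 2 := rfl
        omega
    have hle : (symmDiff S₁ S₂).card ≤ ∑ a : Fin n ⊕ Fin m, Stmt3.wt' Xb a := by
      rw [hsd]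
      exact Finset.sum_le_sum (fun a _ => hbound a)
    exact hle.trans (Stmt3.wt'_sum hXb)
  · -- small symmetric difference implies agreement
    intro hsd i hi
    by_contra hne
    have hsub : Stmt3.side (C := C) hi (c₁ i hi) ⊆ symmDiff S₁ S₂ := by
      intro v hv
      rw [Finset.mem_symmDiff]
      left
      constructor
      · have : v ∈ S₁.filter (fun u => Stmt3.vclass u = Sum.inl i) := by
          rw [hcf₁ i hi]; exact hv
        exact (Finset.mem_filter.1 this).1
      · intro hv2
        have : v ∈ S₂.filter (fun u => Stmt3.vclass u = Sum.inl i) :=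
          Finset.mem_filter.2 ⟨hv2, Stmt3.vclass_side hi _ hv⟩
        rw [hcf₂ i hi] at this
        exact Stmt3.side_disj hi hne hv this
    have := Finset.card_le_card hsub
    rw [Stmt3.side_card] at this
    omega
end

section
/- Let G = (V, E) be a graph with no isolated vertices, let k ≤ |V|, and let G' be the graph with vertex set V ∪ {e_i : e ∈ E, 1 ≤ i ≤ |V|+1} (the e_i being fresh vertices) and edge set E ∪ {{v, e_i}, {w, e_i} : e = {v,w} ∈ E, 1 ≤ i ≤ |V|+1}. Then {S' ∩ V : S' a dominating set of G' with |S'| ≤ k} = {S : S a vertex cover of G with |S| ≤ k}. -/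
/-- Vertices of the graph `G'` of the Vertex-Cover-to-Dominating-Set reduction: the original
vertices together with `|V|+1` fresh vertices `e_1, …, e_{|V|+1}` for every edge `e` of `G`. -/
abbrev DSVert {α : Type*} [Fintype α] (G : SimpleGraph α) :=
  α ⊕ ({e : Sym2 α // e ∈ G.edgeSet} × Fin (Fintype.card α + 1))

/-- Adjacency of `G'`: the original edges of `G`, together with edges `{v, e_i}` and
`{w, e_i}` for every edge `e = {v,w}` of `G` and every `1 ≤ i ≤ |V|+1`. -/
def dsAdj {α : Type*} [Fintype α] (G : SimpleGraph α) : DSVert G → DSVert G → Prop :=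
  fun u v =>
    (∃ a b : α, G.Adj a b ∧ u = Sum.inl a ∧ v = Sum.inl b) ∨
    (∃ (a : α) (e : {e : Sym2 α // e ∈ G.edgeSet}) (i : Fin (Fintype.card α + 1)),
      a ∈ e.1 ∧ ((u = Sum.inl a ∧ v = Sum.inr (e, i)) ∨ (u = Sum.inr (e, i) ∧ v = Sum.inl a)))

/-- if `G` has no isolated vertices and `k ≤ |V|`, then
`{S' ∩ V : S' a dominating set of G' with |S'| ≤ k} = {S : S a vertex cover of G with |S| ≤ k}`
(where `S' ∩ V` is formalized as the preimage of `S'` under the embedding `V ↪ V(G')`). -/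
theorem stmt_4 {α : Type*} [Fintype α] [DecidableEq α] (G : SimpleGraph α)
    (hiso : ∀ v : α, ∃ w, G.Adj v w) (k : ℕ) (hk : k ≤ Fintype.card α)
    (G' : SimpleGraph (DSVert G)) (hG' : ∀ u v, G'.Adj u v ↔ dsAdj G u v) :
    {T : Finset α | ∃ S' : Finset (DSVert G),
        (∀ v : DSVert G, v ∈ S' ∨ ∃ u ∈ S', G'.Adj u v) ∧ S'.card ≤ k ∧
        T = S'.preimage Sum.inl Sum.inl_injective.injOn}
      = {S : Finset α | (∀ u v, G.Adj u v → u ∈ S ∨ v ∈ S) ∧ S.card ≤ k} := by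
  ext T
  simp only [Set.mem_setOf_eq]
  constructor
  · rintro ⟨S', hdom, hcard, rfl⟩
    have hTcard : (S'.preimage Sum.inl Sum.inl_injective.injOn).card ≤ k := by
      calc (S'.preimage Sum.inl Sum.inl_injective.injOn).card
          = ((S'.preimage Sum.inl Sum.inl_injective.injOn).image Sum.inl).card := by
            rw [Finset.card_image_of_injective _ Sum.inl_injective]
        _ ≤ S'.card := Finset.card_le_card (by
            intro x hx
            simp only [Finset.mem_image] at hx
            obtain ⟨a, ha, rfl⟩ := hx
            exact (Finset.mem_preimage).mp ha)
        _ ≤ k := hcard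
    refine ⟨?_, hTcard⟩
    intro u v huv
    by_contra hcon
    push_neg at hcon
    obtain ⟨hu, hv⟩ := hcon
    rw [Finset.mem_preimage] at hu hv
    -- all the inr (e, i) must be in S'
    have he : s(u, v) ∈ G.edgeSet := huv
    have hall : ∀ i : Fin (Fintype.card α + 1),
        (Sum.inr (⟨s(u,v), he⟩, i) : DSVert G) ∈ S' := by
      intro i
      rcases hdom (Sum.inr (⟨s(u,v), he⟩, i)) with h | ⟨w, hw, hadj⟩
      · exact h
      · rw [hG'] at hadj
        rcases hadj with ⟨a, b, _, _, h2⟩ | ⟨a, e, j, hae, h⟩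
        · exact absurd h2 (by simp)
        · rcases h with ⟨h1, h2⟩ | ⟨h1, h2⟩
          · have he1 : e = ⟨s(u,v), he⟩ := by
              injection h2 with h2
              exact (congrArg Prod.fst h2).symm
            subst he1
            have haS : Sum.inl a ∈ S' := h1 ▸ hw
            rcases Sym2.mem_iff.mp hae with rfl | rfl
            · exact absurd haS hu
            · exact absurd haS hv
          · simp at h2
    have hsub : (Finset.univ.image fun i : Fin (Fintype.card α + 1) =>
        (Sum.inr (⟨s(u,v), he⟩, i) : DSVert G)) ⊆ S' := by
      intro x hx
      simp only [Finset.mem_image] at hx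
      obtain ⟨i, -, rfl⟩ := hx
      exact hall i
    have hbig : Fintype.card α + 1 ≤ S'.card := by
      calc Fintype.card α + 1
          = (Finset.univ.image fun i : Fin (Fintype.card α + 1) =>
              (Sum.inr (⟨s(u,v), he⟩, i) : DSVert G)).card := by
            rw [Finset.card_image_of_injective _ (fun i j h => by
              injection h with h; exact (Prod.mk.injEq .. ▸ h).2)]
            simp
        _ ≤ S'.card := Finset.card_le_card hsub
    omega
  · rintro ⟨hcov, hcard⟩
    refine ⟨T.image Sum.inl, ?_, ?_, ?_⟩
    · intro v
      match v with
      | Sum.inl a =>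
        by_cases ha : a ∈ T
        · exact Or.inl (Finset.mem_image_of_mem _ ha)
        · obtain ⟨w, hw⟩ := hiso a
          rcases hcov a w hw with h | h
          · exact absurd h ha
          · refine Or.inr ⟨Sum.inl w, Finset.mem_image_of_mem _ h, ?_⟩
            rw [hG']
            exact Or.inl ⟨w, a, hw.symm, rfl, rfl⟩
      | Sum.inr (e, i) =>
        obtain ⟨x, y, hxy, hxe⟩ : ∃ x y, G.Adj x y ∧ s(x, y) = e.1 := by
          obtain ⟨ee, hee⟩ := e
          induction ee using Sym2.ind with
          | _ x y => exact ⟨x, y, hee, rfl⟩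
        rcases hcov x y hxy with h | h
        · refine Or.inr ⟨Sum.inl x, Finset.mem_image_of_mem _ h, ?_⟩
          rw [hG']
          exact Or.inr ⟨x, e, i, hxe ▸ Sym2.mem_mk_left x y, Or.inl ⟨rfl, rfl⟩⟩
        · refine Or.inr ⟨Sum.inl y, Finset.mem_image_of_mem _ h, ?_⟩
          rw [hG']
          exact Or.inr ⟨y, e, i, hxe ▸ Sym2.mem_mk_right x y, Or.inl ⟨rfl, rfl⟩⟩
    · rwa [Finset.card_image_of_injective _ Sum.inl_injective]
    · ext a
      simp [Finset.mem_preimage]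
end

section
/- Let G = (V, E) be a graph and let k ≤ |V|. Let D' be the digraph with vertices {v_0, v_1 : v ∈ V} together with fresh vertices p^{v,w}_i and p^{w,v}_i for every edge {v, w} ∈ E and every 1 ≤ i ≤ |V|+1, and with arcs: (v_0, v_1) for every v ∈ V, and for every edge {v, w} ∈ E and every 1 ≤ i ≤ |V|+1 the arcs (v_1, p^{v,w}_i), (p^{v,w}_i, w_0), (w_1, p^{w,v}_i), (p^{w,v}_i, v_0). Let A_V = {(v_0, v_1) : v ∈ V}. Then {F ∩ A_V : F a feedback arc set of D' with |F| ≤ k} = {{(v_0, v_1) : v ∈ S} : S a vertex cover of G with |S| ≤ k}. -/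
/-- The relation `A` (the arc relation of a digraph) has a directed cycle:
a nonempty closed directed walk with no repeated vertices. -/
def HasDicycle {V : Type*} (A : V → V → Prop) : Prop :=
  ∃ (v : V) (l : List V), (v :: l).Nodup ∧
    List.Chain A v l ∧ A ((v :: l).getLast (List.cons_ne_nil v l)) v

/-- Vertices of the digraph `D'` of the Vertex-Cover-to-Feedback-Arc-Set reduction:
`v_0 = (v, false)` and `v_1 = (v, true)` for every vertex `v`, together with fresh
vertices `p^{v,w}_i` for every (ordered) edge `(v,w)` of `G` and every `1 ≤ i ≤ |V|+1`. -/
abbrev FASVert {α : Type*} [Fintype α] (G : SimpleGraph α) :=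
  (α × Bool) ⊕ ({p : α × α // G.Adj p.1 p.2} × Fin (Fintype.card α + 1))

/-- Arcs of `D'`: `(v_0, v_1)` for every `v`, and for every edge `{v,w}` of `G` and every
`1 ≤ i ≤ |V|+1` the arcs `(v_1, p^{v,w}_i)`, `(p^{v,w}_i, w_0)`, `(w_1, p^{w,v}_i)`,
`(p^{w,v}_i, v_0)`. -/
def fasArc {α : Type*} [Fintype α] (G : SimpleGraph α) : FASVert G → FASVert G → Prop :=
  fun u v =>
    (∃ a : α, u = Sum.inl (a, false) ∧ v = Sum.inl (a, true)) ∨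
    (∃ (p : {p : α × α // G.Adj p.1 p.2}) (i : Fin (Fintype.card α + 1)),
      (u = Sum.inl (p.1.1, true) ∧ v = Sum.inr (p, i)) ∨
      (u = Sum.inr (p, i) ∧ v = Sum.inl (p.1.2, false)))

/-!
An uncovered edge `{v, w}` leaves both arcs `(v_0, v_1)` and `(w_0, w_1)` in `D' \ F`, and a set
`F` of at most `|V|` arcs cannot meet all `|V| + 1` parallel paths `v_1 → p^{v,w}_i → w_0`, nor all
those from `w_1` to `v_0`; together they close a directed 6-cycle. Conversely, deleting the arcs
`(v_0, v_1)` of a vertex cover `S` leaves a digraph admitting a strictly increasing rank function.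
-/

set_option synthInstance.maxSize 512
set_option synthInstance.maxHeartbeats 800000

open Finset Function Relation

lemma HasDicycle.exists_transGen_self {V : Type*} {A : V → V → Prop} (h : HasDicycle A) :
    ∃ v, TransGen A v v := by
  obtain ⟨v, l, -, hchain, hlast⟩ := h
  exact ⟨v, .tail' (List.relationReflTransGen_of_exists_isChain_cons l hchain rfl) hlast⟩

lemma not_hasDicycle_of_rank_lt {V β : Type*} [Preorder β] {A : V → V → Prop} (r : V → β)
    (hr : ∀ u v, A u v → r u < r v) : ¬HasDicycle A := by
  intro hA
  obtain ⟨v, hv⟩ := hA.exists_transGen_self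
  have hlt : TransGen (· < ·) (r v) (r v) := TransGen.lift r hr v v hv
  rw [transGen_eq_self] at hlt
  exact lt_irrefl _ hlt

lemma Finset.exists_notMem_and_notMem_of_card_lt {ι β : Type*} [Fintype ι] {F : Finset β}
    {g₁ g₂ : ι → β} (hg₁ : Injective g₁) (hg₂ : Injective g₂) (hne : ∀ i j, g₁ i ≠ g₂ j)
    (hF : #F < Fintype.card ι) : ∃ i, g₁ i ∉ F ∧ g₂ i ∉ F := by
  classical
  by_contra! hhit
  let g : ι → β := fun i => if g₁ i ∈ F then g₁ i else g₂ i
  have hg : Injective g := by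
    intro i j hij
    by_cases hi : g₁ i ∈ F <;> by_cases hj : g₁ j ∈ F <;>
      simp_all [g, hg₁.eq_iff, hg₂.eq_iff, (hne _ _).symm]
  have hcard : #(univ : Finset ι) ≤ #F :=
    card_le_card_of_injOn g (fun i _ => by by_cases h : g₁ i ∈ F <;> simp [g, h, hhit]) hg.injOn
  simp only [card_univ] at hcard
  omega

section Reduction

variable {α : Type*} [Fintype α] (G : SimpleGraph α)

abbrev vertexArc (a : α) : FASVert G × FASVert G :=
  (Sum.inl (a, false), Sum.inl (a, true))

def PathAvoids (F : Finset (FASVert G × FASVert G)) (e : {p : α × α // G.Adj p.1 p.2})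
    (i : Fin (Fintype.card α + 1)) : Prop :=
  (Sum.inl (e.1.1, true), Sum.inr (e, i)) ∉ F ∧ (Sum.inr (e, i), Sum.inl (e.1.2, false)) ∉ F

variable {G}

lemma exists_pathAvoids {F : Finset (FASVert G × FASVert G)}
    (hF : #F ≤ Fintype.card α) (e : {p : α × α // G.Adj p.1 p.2}) : ∃ i, PathAvoids G F e i :=
  exists_notMem_and_notMem_of_card_lt (by intro i j h; simpa using h) (by intro i j h; simpa using h)
    (by simp) (by simpa using Nat.lt_succ_of_le hF)

lemma hasDicycle_of_adj {F : Finset (FASVert G × FASVert G)} {u v : α} (huv : G.Adj u v)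
    {i j : Fin (Fintype.card α + 1)} (hu : vertexArc G u ∉ F) (hv : vertexArc G v ∉ F)
    (hi : PathAvoids G F ⟨(u, v), huv⟩ i) (hj : PathAvoids G F ⟨(v, u), huv.symm⟩ j) :
    HasDicycle (fun x y => fasArc G x y ∧ (x, y) ∉ F) := by
  refine ⟨Sum.inl (u, false), [Sum.inl (u, true), Sum.inr (⟨(u, v), huv⟩, i), Sum.inl (v, false),
    Sum.inl (v, true), Sum.inr (⟨(v, u), huv.symm⟩, j)], ?_, ?_, ?_⟩
  · simp [G.ne_of_adj huv]
  · exact .cons_cons ⟨.inl ⟨u, rfl, rfl⟩, hu⟩ <| .cons_cons ⟨.inr ⟨_, i, .inl ⟨rfl, rfl⟩⟩, hi.1⟩ <|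
      .cons_cons ⟨.inr ⟨_, i, .inr ⟨rfl, rfl⟩⟩, hi.2⟩ <| .cons_cons ⟨.inl ⟨v, rfl, rfl⟩, hv⟩ <|
      .cons_cons ⟨.inr ⟨_, j, .inl ⟨rfl, rfl⟩⟩, hj.1⟩ <| .singleton _
  · exact ⟨.inr ⟨_, j, .inr ⟨rfl, rfl⟩⟩, hj.2⟩

variable [DecidableEq α]

variable (G) in
def cutVertices (F : Finset (FASVert G × FASVert G)) : Finset α :=
  univ.filter (vertexArc G · ∈ F)

lemma isVertexCover_cutVertices {F : Finset (FASVert G × FASVert G)} (hF : #F ≤ Fintype.card α)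
    (hacyc : ¬HasDicycle (fun x y => fasArc G x y ∧ (x, y) ∉ F)) :
    G.IsVertexCover ↑(cutVertices G F) := by
  intro u v huv
  by_contra! hcut
  simp only [cutVertices, coe_filter, mem_univ, true_and, Set.mem_ofPred_eq] at hcut
  obtain ⟨i, hi⟩ := exists_pathAvoids hF ⟨(u, v), huv⟩
  obtain ⟨j, hj⟩ := exists_pathAvoids hF ⟨(v, u), huv.symm⟩
  exact hacyc (hasDicycle_of_adj huv hcut.1 hcut.2 hi hj)

lemma image_cutVertices (F : Finset (FASVert G × FASVert G)) :
    (cutVertices G F).image (vertexArc G) = F ∩ univ.image (vertexArc G) := by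
  rw [cutVertices, ← filter_image (p := (· ∈ F)), filter_mem_eq_inter, inter_comm]

lemma card_cutVertices_le (F : Finset (FASVert G × FASVert G)) : #(cutVertices G F) ≤ #F := by
  rw [← card_image_of_injective (f := vertexArc G) _ (fun a b h => by simpa using h),
    image_cutVertices]
  exact card_le_card inter_subset_left

/-- Once the arcs `(v_0, v_1)`, `v ∈ S`, are deleted, every remaining arc moves forward along
`v_1 (v ∈ S) → p^{v,w} (w ∉ S) → w_0 → w_1 → p^{w,x} (x ∈ S) → x_0`. -/
def coverRank (S : Finset α) : FASVert G → ℕ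
  | Sum.inl (a, true) => if a ∈ S then 0 else 3
  | Sum.inr (e, _) => if e.1.2 ∈ S then 4 else 1
  | Sum.inl (a, false) => if a ∈ S then 5 else 2

lemma not_hasDicycle_of_isVertexCover {S : Finset α} (hS : G.IsVertexCover ↑S) :
    ¬HasDicycle (fun x y => fasArc G x y ∧ (x, y) ∉ S.image (vertexArc G)) := by
  refine not_hasDicycle_of_rank_lt (coverRank S) ?_
  rintro x y ⟨⟨a, rfl, rfl⟩ | ⟨e, i, ⟨rfl, rfl⟩ | ⟨rfl, rfl⟩⟩, hnot⟩
  · have ha : a ∉ S := fun ha => hnot (mem_image_of_mem _ ha)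
    simp [coverRank, ha]
  · by_cases hv : e.1.1 ∈ S
    · by_cases hw : e.1.2 ∈ S <;> simp [coverRank, hv, hw]
    · have hw : e.1.2 ∈ S := (hS e.2).resolve_left hv
      simp [coverRank, hv, hw]
  · by_cases hw : e.1.2 ∈ S <;> simp [coverRank, hw]

end Reduction

/-- with `A_V = {(v_0, v_1) : v ∈ V}` and `k ≤ |V|`,
`{F ∩ A_V : F a feedback arc set of D' with |F| ≤ k}`
` = {{(v_0,v_1) : v ∈ S} : S a vertex cover of G with |S| ≤ k}`. -/
theorem stmt_6 {α : Type*} [Fintype α] [DecidableEq α] (G : SimpleGraph α)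
    (k : ℕ) (hk : k ≤ Fintype.card α) :
    {T : Finset (FASVert G × FASVert G) | ∃ F : Finset (FASVert G × FASVert G),
        (∀ p ∈ F, fasArc G p.1 p.2) ∧
        (¬ HasDicycle (fun u v => fasArc G u v ∧ (u, v) ∉ F)) ∧
        F.card ≤ k ∧
        T = F ∩ Finset.univ.image
          (fun a : α => ((Sum.inl (a, false) : FASVert G), (Sum.inl (a, true) : FASVert G)))}
      = {T : Finset (FASVert G × FASVert G) | ∃ S : Finset α,
          (∀ u v, G.Adj u v → u ∈ S ∨ v ∈ S) ∧ S.card ≤ k ∧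
          T = S.image
            (fun a => ((Sum.inl (a, false) : FASVert G), (Sum.inl (a, true) : FASVert G)))} := by
  ext T
  constructor
  · rintro ⟨F, -, hacyc, hFk, rfl⟩
    exact ⟨cutVertices G F, fun u v huv => isVertexCover_cutVertices (hFk.trans hk) hacyc huv,
      (card_cutVertices_le F).trans hFk, (image_cutVertices F).symm⟩
  · rintro ⟨S, hS, hSk, rfl⟩
    refine ⟨S.image (vertexArc G), ?_, not_hasDicycle_of_isVertexCover (fun u v huv => hS u v huv),
      card_image_le.trans hSk, ?_⟩
    · exact forall_mem_image.2 fun a _ => .inl ⟨a, rfl, rfl⟩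
    · exact (inter_eq_left.mpr (image_subset_image (subset_univ S))).symm
end

section
/- Let φ be a 3CNF instance with variables x_1,…,x_n and clauses c_1,…,c_m, and let b = 7. Define the following indexed family of natural numbers: for each literal ℓ of variable x_i, the number a_ℓ = b^{m+i−1} + Σ_{j : ℓ ∈ c_j} b^{j−1}; for each clause c_j, the numbers d_j = b^{j−1} and e_j = 2·b^{j−1}. Let the target be M = Σ_{i=1}^{n} b^{m+i−1} + Σ_{j=1}^{m} 4·b^{j−1}. Then: (i) φ is satisfiable if and only if some subfamily of {a_ℓ : ℓ literal} ∪ {d_j, e_j : 1 ≤ j ≤ m} has sum exactly M; and (ii) the sets {ℓ : a_ℓ ∈ S} taken over all subfamilies S of total sum exactly M are exactly the satisfying literal sets of φ. -/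
/-- Index set of the 3SAT-to-Subset-Sum family: one number `a_ℓ` per literal `ℓ`
(`Sum.inl ℓ`) and, per clause `c_j`, the numbers `d_j` (`Sum.inr (j, false)`) and
`e_j` (`Sum.inr (j, true)`). -/
abbrev SSIdx (n m : ℕ) := Lit n ⊕ (Fin m × Bool)

/-- The numbers of the family, in base `b = 7` (indices are 0-based, while the statement
is 1-based): `a_ℓ = 7^{m+i} + ∑_{j : ℓ ∈ c_j} 7^j` for a literal `ℓ` of variable `x_i`,
`d_j = 7^j` and `e_j = 2·7^j`. -/
def ssVal {n m : ℕ} (C : Fin m → Finset (Lit n)) : SSIdx n m → ℕ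
  | Sum.inl ℓ =>
      7 ^ (m + (ℓ.1 : ℕ)) + ∑ j ∈ Finset.univ.filter (fun j : Fin m => ℓ ∈ C j), 7 ^ (j : ℕ)
  | Sum.inr (j, false) => 7 ^ (j : ℕ)
  | Sum.inr (j, true) => 2 * 7 ^ (j : ℕ)

/-- The target `M = ∑_{i=1}^n 7^{m+i-1} + ∑_{j=1}^m 4·7^{j-1}`. -/
def ssTarget (n m : ℕ) : ℕ :=
  (∑ i : Fin n, 7 ^ (m + (i : ℕ))) + ∑ j : Fin m, 4 * 7 ^ (j : ℕ)

section Aux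
open Finset
variable {n m : ℕ} (C : Fin m → Finset (Lit n))

def litA (S : Finset (SSIdx n m)) : Finset (Lit n) := univ.filter (fun ℓ => Sum.inl ℓ ∈ S)

def vdig (S : Finset (SSIdx n m)) (i : Fin n) : ℕ :=
  (if Sum.inl ((i, true) : Lit n) ∈ S then 1 else 0) +
  (if Sum.inl ((i, false) : Lit n) ∈ S then 1 else 0)

def cdig (S : Finset (SSIdx n m)) (j : Fin m) : ℕ :=
  (litA S ∩ C j).card + (if Sum.inr ((j, false) : Fin m × Bool) ∈ S then 1 else 0)
    + (if Sum.inr ((j, true) : Fin m × Bool) ∈ S then 2 else 0)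

lemma clause_card (S : Finset (SSIdx n m)) (j : Fin m) :
    ((litA S ∩ C j).card : ℕ)
      = ∑ ℓ : Lit n, (if Sum.inl ℓ ∈ S then 1 else 0) * (if ℓ ∈ C j then 1 else 0) := by
  have h : litA S ∩ C j = univ.filter (fun ℓ : Lit n => Sum.inl ℓ ∈ S ∧ ℓ ∈ C j) := by
    ext ℓ; simp [litA, and_comm]
  rw [h, Finset.card_eq_sum_ones, Finset.sum_filter]
  exact Finset.sum_congr rfl (fun ℓ _ => by
    by_cases h1 : Sum.inl ℓ ∈ S <;> by_cases h2 : ℓ ∈ C j <;> simp [h1, h2])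

lemma sum_eq (S : Finset (SSIdx n m)) :
    ∑ x ∈ S, ssVal C x
      = (∑ i : Fin n, vdig S i * 7 ^ (m + (i : ℕ))) + ∑ j : Fin m, cdig C S j * 7 ^ (j : ℕ) := by
  have h0 : ∑ x ∈ S, ssVal C x = ∑ x : SSIdx n m, if x ∈ S then ssVal C x else 0 := by
    rw [Finset.sum_ite_mem, univ_inter]
  rw [h0, Fintype.sum_sum_type]
  have hl : ∑ ℓ : Lit n, (if Sum.inl ℓ ∈ S then ssVal C (Sum.inl ℓ) else 0)
      = (∑ i : Fin n, vdig S i * 7 ^ (m + (i : ℕ)))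
        + ∑ j : Fin m, ((litA S ∩ C j).card : ℕ) * 7 ^ (j : ℕ) := by
    have step : ∑ ℓ : Lit n, (if Sum.inl ℓ ∈ S then ssVal C (Sum.inl ℓ) else 0)
        = ∑ ℓ : Lit n, ((if Sum.inl ℓ ∈ S then 1 else 0) * 7 ^ (m + (ℓ.1 : ℕ))
          + ∑ j : Fin m, (if Sum.inl ℓ ∈ S then 1 else 0)
              * ((if ℓ ∈ C j then 1 else 0) * 7 ^ (j : ℕ))) := by
      refine Finset.sum_congr rfl (fun ℓ _ => ?_)
      by_cases h : Sum.inl ℓ ∈ S <;> simp [ssVal, h, Finset.sum_filter, ite_mul]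
    rw [step, Finset.sum_add_distrib]
    congr 1
    · rw [Fintype.sum_prod_type]
      refine Finset.sum_congr rfl (fun i _ => ?_)
      rw [Fintype.sum_bool]
      simp [vdig, add_mul]
    · rw [Finset.sum_comm]
      refine Finset.sum_congr rfl (fun j _ => ?_)
      rw [clause_card, Finset.sum_mul]
      exact Finset.sum_congr rfl (fun ℓ _ => by ring)
  have hr : ∑ p : Fin m × Bool, (if Sum.inr p ∈ S then ssVal C (Sum.inr p) else 0)
      = ∑ j : Fin m, ((if Sum.inr ((j, false) : Fin m × Bool) ∈ S then 1 else 0)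
          + (if Sum.inr ((j, true) : Fin m × Bool) ∈ S then 2 else 0)) * 7 ^ (j : ℕ) := by
    rw [Fintype.sum_prod_type]
    refine Finset.sum_congr rfl (fun j _ => ?_)
    rw [Fintype.sum_bool]
    simp only [ssVal]
    by_cases h1 : Sum.inr ((j, true) : Fin m × Bool) ∈ S <;>
      by_cases h2 : Sum.inr ((j, false) : Fin m × Bool) ∈ S <;> simp [h1, h2] <;> ring
  rw [hl, hr, add_assoc, ← Finset.sum_add_distrib]
  congr 1
  refine Finset.sum_congr rfl (fun j _ => ?_)
  simp only [cdig]
  ring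

lemma digits_unique : ∀ (N : ℕ) (f g : ℕ → ℕ), (∀ k, f k < 7) → (∀ k, g k < 7) →
    (∑ k ∈ range N, f k * 7 ^ k = ∑ k ∈ range N, g k * 7 ^ k) → ∀ k < N, f k = g k := by
  intro N
  induction N with
  | zero => intro f g _ _ _ k hk; omega
  | succ N ih =>
    intro f g hf hg h k hk
    rw [Finset.sum_range_succ', Finset.sum_range_succ'] at h
    simp only [pow_succ, ← mul_assoc] at h
    have h1 : (∑ k ∈ range N, f (k+1) * 7 ^ k) * 7 + f 0 * 7^0
        = (∑ k ∈ range N, g (k+1) * 7 ^ k) * 7 + g 0 * 7^0 := by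
      rw [Finset.sum_mul, Finset.sum_mul]
      convert h using 3 <;> ring
    simp only [pow_zero, mul_one] at h1
    have hf0 := hf 0; have hg0 := hg 0
    have h0 : f 0 = g 0 ∧ (∑ k ∈ range N, f (k+1) * 7 ^ k) = ∑ k ∈ range N, g (k+1) * 7 ^ k := by
      omega
    match k, hk with
    | 0, _ => exact h0.1
    | (k+1), hk =>
      exact ih (fun k => f (k+1)) (fun k => g (k+1)) (fun k => hf _) (fun k => hg _) h0.2 k
        (by omega)

lemma sum_eq_target_iff (hC : ∀ j, (C j).card = 3) (S : Finset (SSIdx n m)) :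
    (∑ x ∈ S, ssVal C x = ssTarget n m)
      ↔ (∀ i, vdig S i = 1) ∧ (∀ j, cdig C S j = 4) := by
  constructor
  · intro h
    set f : ℕ → ℕ := fun k =>
      if hk : k < m then cdig C S ⟨k, hk⟩
      else if hk' : k - m < n then vdig S ⟨k - m, hk'⟩ else 0 with hfdef
    set g : ℕ → ℕ := fun k => if k < m then 4 else if k - m < n then 1 else 0 with hgdef
    have hvb : ∀ i, vdig S i ≤ 2 := by
      intro i; unfold vdig; split <;> split <;> omega
    have hcb : ∀ j, cdig C S j ≤ 6 := by
      intro j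
      have : (litA S ∩ C j).card ≤ 3 := by
        rw [← hC j]; exact Finset.card_le_card Finset.inter_subset_right
      unfold cdig; split <;> split <;> omega
    have hf : ∀ k, f k < 7 := by
      intro k; simp only [hfdef]
      split
      · exact lt_of_le_of_lt (hcb _) (by norm_num)
      · split
        · exact lt_of_le_of_lt (hvb _) (by norm_num)
        · norm_num
    have hg : ∀ k, g k < 7 := by intro k; simp only [hgdef]; split <;> [omega; split <;> omega]
    have hfs : ∑ k ∈ range (m + n), f k * 7 ^ k = ∑ x ∈ S, ssVal C x := by
      have e1 : ∑ k ∈ range m, f k * 7 ^ k = ∑ j : Fin m, cdig C S j * 7 ^ (j : ℕ) := by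
        rw [← Fin.sum_univ_eq_sum_range (fun k => f k * 7 ^ k) m]
        refine Finset.sum_congr rfl (fun j _ => ?_)
        simp only [hfdef, j.isLt, dif_pos, Fin.eta]
      have e2 : ∑ k ∈ range n, f (m + k) * 7 ^ (m + k)
          = ∑ i : Fin n, vdig S i * 7 ^ (m + (i : ℕ)) := by
        rw [← Fin.sum_univ_eq_sum_range (fun k => f (m + k) * 7 ^ (m + k)) n]
        refine Finset.sum_congr rfl (fun i _ => ?_)
        have h1 : ¬ (m + (i : ℕ) < m) := by omega
        have h2 : m + (i : ℕ) - m = (i : ℕ) := by omega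
        simp only [hfdef, h1, dif_neg, not_false_iff, h2, i.isLt, dif_pos, Fin.eta]
      rw [Finset.sum_range_add, e1, e2, sum_eq, add_comm]
    have hgs : ∑ k ∈ range (m + n), g k * 7 ^ k = ssTarget n m := by
      have e1 : ∑ k ∈ range m, g k * 7 ^ k = ∑ j : Fin m, 4 * 7 ^ (j : ℕ) := by
        rw [← Fin.sum_univ_eq_sum_range (fun k => g k * 7 ^ k) m]
        refine Finset.sum_congr rfl (fun j _ => ?_)
        simp only [hgdef, j.isLt, if_pos]
      have e2 : ∑ k ∈ range n, g (m + k) * 7 ^ (m + k) = ∑ i : Fin n, 7 ^ (m + (i : ℕ)) := by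
        rw [← Fin.sum_univ_eq_sum_range (fun k => g (m + k) * 7 ^ (m + k)) n]
        refine Finset.sum_congr rfl (fun i _ => ?_)
        have h1 : ¬ (m + (i : ℕ) < m) := by omega
        have h2 : m + (i : ℕ) - m = (i : ℕ) := by omega
        simp only [hgdef, h1, if_neg, not_false_iff, h2, i.isLt, if_pos, one_mul]
      rw [Finset.sum_range_add, e1, e2, ssTarget, add_comm]
    have key := digits_unique (m + n) f g hf hg (by rw [hfs, hgs, h])
    constructor
    · intro i
      have := key (m + (i : ℕ)) (by omega)
      have h1 : ¬ (m + (i : ℕ) < m) := by omega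
      have h2 : m + (i : ℕ) - m = (i : ℕ) := by omega
      simp only [hfdef, hgdef, h1, dif_neg, not_false_iff, if_neg, h2, i.isLt, dif_pos,
        if_pos, Fin.eta] at this
      exact this
    · intro j
      have := key (j : ℕ) (by omega)
      simp only [hfdef, hgdef, j.isLt, dif_pos, if_pos, Fin.eta] at this
      exact this
  · rintro ⟨hv, hc⟩
    rw [sum_eq, ssTarget]
    congr 1
    · exact Finset.sum_congr rfl (fun i _ => by rw [hv i, one_mul])
    · exact Finset.sum_congr rfl (fun j _ => by rw [hc j])

lemma back (hC : ∀ j, (C j).card = 3) (S : Finset (SSIdx n m))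
    (h : ∑ x ∈ S, ssVal C x = ssTarget n m) : SatLitSet C (litA S) := by
  obtain ⟨hv, hc⟩ := (sum_eq_target_iff C hC S).1 h
  constructor
  · intro i
    have := hv i
    by_cases h1 : Sum.inl ((i, true) : Lit n) ∈ S <;>
      by_cases h2 : Sum.inl ((i, false) : Lit n) ∈ S <;>
      simp [vdig, h1, h2] at this ⊢ <;> simp [Xor', litA, h1, h2]
  · intro j
    have := hc j
    have hcard : 1 ≤ (litA S ∩ C j).card := by
      unfold cdig at this; split at this <;> split at this <;> omega
    obtain ⟨ℓ, hℓ⟩ := Finset.card_pos.1 hcard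
    rw [Finset.mem_inter] at hℓ
    exact ⟨ℓ, hℓ.2, hℓ.1⟩

lemma fwd (hC : ∀ j, (C j).card = 3) (A : Finset (Lit n)) (hA : SatLitSet C A) :
    ∃ S : Finset (SSIdx n m), (∑ x ∈ S, ssVal C x = ssTarget n m)
      ∧ ∀ ℓ : Lit n, ℓ ∈ A ↔ Sum.inl ℓ ∈ S := by
  classical
  let P : SSIdx n m → Prop := fun x =>
    match x with
    | Sum.inl ℓ => ℓ ∈ A
    | Sum.inr (j, false) => (A ∩ C j).card = 1 ∨ (A ∩ C j).card = 3
    | Sum.inr (j, true) => (A ∩ C j).card ≤ 2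
  refine ⟨univ.filter P, ?_, fun ℓ => by simp [P]⟩
  have hlit : litA (univ.filter P) = A := by
    ext ℓ; simp [litA, P]
  rw [sum_eq_target_iff C hC]
  constructor
  · intro i
    have hx := hA.1 i
    unfold vdig
    simp only [Finset.mem_filter, Finset.mem_univ, true_and]
    rcases hx with ⟨h1, h2⟩ | ⟨h1, h2⟩ <;> simp [P, h1, h2]
  · intro j
    have h1 : 1 ≤ (A ∩ C j).card := by
      obtain ⟨ℓ, hℓC, hℓA⟩ := hA.2 j
      exact Finset.card_pos.2 ⟨ℓ, Finset.mem_inter.2 ⟨hℓA, hℓC⟩⟩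
    have h3 : (A ∩ C j).card ≤ 3 := by
      rw [← hC j]; exact Finset.card_le_card Finset.inter_subset_right
    unfold cdig
    rw [hlit]
    simp only [Finset.mem_filter, Finset.mem_univ, true_and]
    by_cases e1 : (A ∩ C j).card = 1
    · simp [P, e1]
    · by_cases e2 : (A ∩ C j).card = 2
      · simp [P, e2]
      · have e3 : (A ∩ C j).card = 3 := by omega
        simp [P, e3]

end Aux

/-- (i) `φ` is satisfiable iff some subfamily sums to exactly `M`, and
(ii) the sets `{ℓ : a_ℓ ∈ S}` over subfamilies `S` of sum exactly `M` are exactly the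
satisfying literal sets of `φ`. -/
theorem stmt_9 {n m : ℕ} (C : Fin m → Finset (Lit n)) (hC : ∀ j, (C j).card = 3) :
    ((∃ A, SatLitSet C A) ↔ ∃ S : Finset (SSIdx n m), ∑ x ∈ S, ssVal C x = ssTarget n m) ∧
    {A : Finset (Lit n) | SatLitSet C A}
      = {A : Finset (Lit n) | ∃ S : Finset (SSIdx n m),
          (∑ x ∈ S, ssVal C x = ssTarget n m) ∧ ∀ ℓ : Lit n, ℓ ∈ A ↔ Sum.inl ℓ ∈ S} := by
  constructor
  · constructor
    · rintro ⟨A, hA⟩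
      obtain ⟨S, hS, -⟩ := fwd C hC A hA
      exact ⟨S, hS⟩
    · rintro ⟨S, hS⟩
      exact ⟨litA S, back C hC S hS⟩
  · ext A
    simp only [Set.mem_setOf_eq]
    constructor
    · exact fwd C hC A
    · rintro ⟨S, hS, hmem⟩
      have hA : A = litA S := by
        ext ℓ; simp [litA, hmem ℓ]
      rw [hA]
      exact back C hC S hS
end

section
/- Let a_1,…,a_n be positive integers with total sum Σ = a_1 + ⋯ + a_n, and let M ≤ Σ be a natural number. Consider the extended indexed family consisting of a_1,…,a_n together with the two numbers x = M+1 and y = Σ+1−M (total sum 2Σ+2). Then: (i) there is a subset S ⊆ {1,…,n} with Σ_{i∈S} a_i = M if and only if the extended family has a subfamily of sum Σ+1 (equivalently, can be split into two parts of equal sum); and (ii) S ↦ S ∪ {y} is a bijection between {S ⊆ {1,…,n} : Σ_{i∈S} a_i = M} and the subfamilies of the extended family that have sum Σ+1 and contain y. -/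
/-!
Every subfamily of the `a i` sums to at most `Σ`, so a subfamily of the extended family of sum
`Σ + 1` contains exactly one of `x = M + 1` and `y = Σ + 1 - M`: both would give at least `Σ + 2`,
neither at most `Σ`. If it contains `y`, its remaining elements sum to `M`; if it contains `x`,
they sum to `Σ - M`, and their complement among the `a i` sums to `M`. (When `M > Σ`, truncated
subtraction makes `y = 0` and neither case can occur.)
-/

open Finset

namespace SubsetSumPartition

variable {ι : Type*} [Fintype ι] [DecidableEq ι] (a : ι → ℕ) (M : ℕ)

def extendedWeight : ι ⊕ Bool → ℕ :=
  Sum.elim a fun b => if b then (∑ i, a i) + 1 - M else M + 1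

omit [Fintype ι] in
lemma toLeft_image_inl_union_inr (S : Finset ι) (b : Bool) :
    (S.image Sum.inl ∪ {Sum.inr b}).toLeft = S := by
  ext i; simp

lemma sum_finset_bool {β : Type*} [AddCommMonoid β] (u : Finset Bool) (g : Bool → β) :
    ∑ b ∈ u, g b = (if true ∈ u then g true else 0) + (if false ∈ u then g false else 0) := by
  rw [← Fintype.sum_bool (fun b => if b ∈ u then g b else 0), sum_ite_mem, univ_inter]

lemma sum_extendedWeight (T : Finset (ι ⊕ Bool)) :
    ∑ x ∈ T, extendedWeight a M x =
      ∑ i ∈ T.toLeft, a i + ((if Sum.inr true ∈ T then (∑ i, a i) + 1 - M else 0) +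
        if Sum.inr false ∈ T then M + 1 else 0) := by
  rw [sum_sum_eq_sum_toLeft_add_sum_toRight, sum_finset_bool]
  simp [extendedWeight]

lemma sum_extendedWeight_eq_iff (T : Finset (ι ⊕ Bool)) :
    ∑ x ∈ T, extendedWeight a M x = (∑ i, a i) + 1 ↔
      (Sum.inr true ∈ T ∧ Sum.inr false ∉ T ∧ ∑ i ∈ T.toLeft, a i = M) ∨
      (Sum.inr true ∉ T ∧ Sum.inr false ∈ T ∧ ∑ i ∈ T.toLeftᶜ, a i = M) := by
  have hle : ∑ i ∈ T.toLeft, a i ≤ ∑ i, a i := sum_le_sum_of_subset (subset_univ _)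
  have hcompl : ∑ i ∈ T.toLeftᶜ, a i + ∑ i ∈ T.toLeft, a i = ∑ i, a i :=
    sum_compl_add_sum T.toLeft a
  rw [sum_extendedWeight]
  split_ifs with hy hx hx <;>
    simp only [hy, hx, not_true, not_false_iff, true_and, false_and, or_false, false_or,
      iff_false, add_zero, zero_add]
  all_goals omega

omit [Fintype ι] in
lemma image_inl_toLeft_union_inr_true {T : Finset (ι ⊕ Bool)} (hy : Sum.inr true ∈ T)
    (hx : Sum.inr false ∉ T) : T.toLeft.image Sum.inl ∪ {Sum.inr true} = T := by
  ext (i | _ | _) <;> simp [hy, hx]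

lemma sum_extendedWeight_image_inl_union_inr_true_eq_iff (S : Finset ι) :
    ∑ x ∈ S.image Sum.inl ∪ {Sum.inr true}, extendedWeight a M x = (∑ i, a i) + 1 ↔
      ∑ i ∈ S, a i = M := by
  rw [sum_extendedWeight_eq_iff, toLeft_image_inl_union_inr]
  simp

theorem exists_sum_eq_iff_exists_sum_extendedWeight_eq :
    (∃ S : Finset ι, ∑ i ∈ S, a i = M) ↔
      ∃ T : Finset (ι ⊕ Bool), ∑ x ∈ T, extendedWeight a M x = (∑ i, a i) + 1 := by
  constructor
  · rintro ⟨S, hS⟩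
    exact ⟨_, (sum_extendedWeight_image_inl_union_inr_true_eq_iff a M S).2 hS⟩
  · rintro ⟨T, hT⟩
    rcases (sum_extendedWeight_eq_iff a M T).1 hT with ⟨-, -, hS⟩ | ⟨-, -, hS⟩
    exacts [⟨_, hS⟩, ⟨_, hS⟩]

theorem bijOn_image_inl_union_inr_true :
    Set.BijOn (fun S : Finset ι => S.image Sum.inl ∪ {Sum.inr true})
      {S | ∑ i ∈ S, a i = M}
      {T | ∑ x ∈ T, extendedWeight a M x = (∑ i, a i) + 1 ∧ Sum.inr true ∈ T} := by
  refine ⟨fun S hS => ⟨(sum_extendedWeight_image_inl_union_inr_true_eq_iff a M S).2 hS,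
    by simp⟩, fun S _ S' _ h => ?_, fun T ⟨hT, hy⟩ => ?_⟩
  · simpa only [toLeft_image_inl_union_inr] using congrArg toLeft h
  · rcases (sum_extendedWeight_eq_iff a M T).1 hT with ⟨-, hx, hS⟩ | ⟨hy', -⟩
    · exact ⟨T.toLeft, hS, image_inl_toLeft_union_inr_true hy hx⟩
    · exact absurd hy hy'

end SubsetSumPartition

open SubsetSumPartition in
theorem stmt_10_general {n : ℕ} (a : Fin n → ℕ) (M : ℕ) :
    ((∃ S : Finset (Fin n), ∑ i ∈ S, a i = M) ↔
      (∃ T : Finset (Fin n ⊕ Bool),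
        ∑ x ∈ T, Sum.elim a (fun b => if b then (∑ i, a i) + 1 - M else M + 1) x
          = (∑ i, a i) + 1)) ∧
    Set.BijOn
      (fun S : Finset (Fin n) =>
        S.image Sum.inl ∪ ({Sum.inr true} : Finset (Fin n ⊕ Bool)))
      {S : Finset (Fin n) | ∑ i ∈ S, a i = M}
      {T : Finset (Fin n ⊕ Bool) |
        (∑ x ∈ T, Sum.elim a (fun b => if b then (∑ i, a i) + 1 - M else M + 1) x
          = (∑ i, a i) + 1) ∧ Sum.inr true ∈ T} :=
  ⟨exists_sum_eq_iff_exists_sum_extendedWeight_eq a M, bijOn_image_inl_union_inr_true a M⟩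

/-- the Subset-Sum-to-Partition reduction. With `Σ = a_1 + ⋯ + a_n`,
`M ≤ Σ`, and the extended family consisting of the `a_i` together with `x = M+1`
(index `Sum.inr false`) and `y = Σ+1−M` (index `Sum.inr true`):
(i) some subset of the `a_i` sums to `M` iff some subfamily of the extended family sums
to `Σ+1`; and (ii) `S ↦ S ∪ {y}` is a bijection between `{S : ∑_{i∈S} a_i = M}` and the
subfamilies of sum `Σ+1` containing `y`. -/
theorem stmt_10 {n : ℕ} (a : Fin n → ℕ) (ha : ∀ i, 0 < a i) (M : ℕ)
    (hM : M ≤ ∑ i, a i) :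
    ((∃ S : Finset (Fin n), ∑ i ∈ S, a i = M) ↔
      (∃ T : Finset (Fin n ⊕ Bool),
        ∑ x ∈ T, Sum.elim a (fun b => if b then (∑ i, a i) + 1 - M else M + 1) x
          = (∑ i, a i) + 1)) ∧
    Set.BijOn
      (fun S : Finset (Fin n) =>
        S.image Sum.inl ∪ ({Sum.inr true} : Finset (Fin n ⊕ Bool)))
      {S : Finset (Fin n) | ∑ i ∈ S, a i = M}
      {T : Finset (Fin n ⊕ Bool) |
        (∑ x ∈ T, Sum.elim a (fun b => if b then (∑ i, a i) + 1 - M else M + 1) x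
          = (∑ i, a i) + 1) ∧ Sum.inr true ∈ T} :=
  stmt_10_general a M
end

section
/- Let G = (V, A) be a loopless digraph with |V| ≥ 2. Let G' be the undirected graph with vertex set V × {in, mid, out}, with edges {(v,in),(v,mid)} and {(v,mid),(v,out)} for every v ∈ V, and an edge {(u,out),(w,in)} for every arc (u,w) ∈ A. Then: (i) every Hamiltonian cycle of G' contains all the edges {(v,in),(v,mid)} and {(v,mid),(v,out)}, v ∈ V; and (ii) the map sending a Hamiltonian cycle C' of G' to {(u,w) ∈ A : {(u,out),(w,in)} ∈ C'} is a bijection from the Hamiltonian cycles of G' to the Hamiltonian cycles of G. In particular, G' has a Hamiltonian cycle if and only if G does. -/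
/-- `C` is a Hamiltonian cycle in the digraph with arc set `A`: the set of arcs of a
directed cycle visiting every vertex exactly once. -/
def IsDHamCycle {V : Type*} (A : Set (V × V)) (C : Set (V × V)) : Prop :=
  ∃ l : List V, l ≠ [] ∧ l.Nodup ∧ (∀ v : V, v ∈ l) ∧ C ⊆ A ∧
    C = {p | p ∈ l.zip (l.rotate 1)}

/-- `C` is a Hamiltonian cycle in the undirected graph with edge set `E`: the set of
edges of a cycle visiting every vertex exactly once. -/
def IsUHamCycle {W : Type*} (E : Set (Sym2 W)) (C : Set (Sym2 W)) : Prop :=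
  ∃ l : List W, l ≠ [] ∧ l.Nodup ∧ (∀ v : W, v ∈ l) ∧ C ⊆ E ∧
    C = {e | e ∈ (l.zip (l.rotate 1)).map fun p => s(p.1, p.2)}

/-- The edge set of the undirected graph `G'` on `V × {in, mid, out}` (tags `0, 1, 2`):
spine edges `{(v,in),(v,mid)}` and `{(v,mid),(v,out)}` for every `v`, and a cross edge
`{(u,out),(w,in)}` for every arc `(u,w) ∈ A`. -/
def tEdges {V : Type*} (A : Set (V × V)) : Set (Sym2 (V × Fin 3)) :=
  {e | (∃ v : V, e = s((v, (0 : Fin 3)), (v, 1)) ∨ e = s((v, (1 : Fin 3)), (v, 2))) ∨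
       (∃ u w : V, (u, w) ∈ A ∧ e = s((u, (2 : Fin 3)), (w, 0)))}

/-!
A Hamiltonian cycle on a finite vertex set is the same as a permutation `σ` with a single orbit:
the cycle is the set of pairs `(x, σ x)`, unordered in the undirected case, where `σ` and `σ⁻¹`
give the same cycle. For a Hamiltonian cycle of `G'` the orbit has at least three points, so
`σ x` and `σ⁻¹ x` are two distinct neighbours of `x`; for `x = (v, mid)` they must be `(v, in)`
and `(v, out)`. Orient `σ` so that it runs through one spine as `in ↦ mid ↦ out`. Then `(v, out)`
leaves along a cross edge to some `(w, in)`, whose spine is again run through as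
`in ↦ mid ↦ out`; following the orbit, every spine is. So `σ` is the splitting
`(v, in) ↦ (v, mid) ↦ (v, out) ↦ (τ v, in)` of a single-orbit permutation `τ` of `V` along arcs
of `A`, and `τ` is read off the cross edges; conversely every such `τ` splits into a Hamiltonian
cycle of `G'`.
-/

open Equiv

namespace Equiv.Perm

variable {α : Type*} {σ : Perm α}

theorem SameCycle.mem_of_mapsTo [Finite α] {s : Set α} {x y : α} (hs : Set.MapsTo σ s s)
    (h : σ.SameCycle x y) (hx : x ∈ s) : y ∈ s := by
  obtain ⟨n, -, rfl⟩ := h.exists_nat_pow_eq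
  rw [coe_pow]
  exact hs.iterate n hx

theorem apply_apply_ne_self [Fintype α] (hσ : ∀ x y, σ.SameCycle x y)
    (hα : 2 < Fintype.card α) (x : α) : σ (σ x) ≠ x := by
  classical
  intro h
  have hpair : Set.MapsTo σ {x, σ x} {x, σ x} := by
    rintro y (rfl | rfl) <;> simp [h]
  have hcover : (Finset.univ : Finset α) ⊆ {x, σ x} := fun y _ => by
    simpa using (hσ x y).mem_of_mapsTo hpair (by simp)
  have := (Finset.card_le_card hcover).trans Finset.card_le_two
  rw [Finset.card_univ] at this
  omega

theorem range_sym2Mk_inv (σ : Perm α) :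
    (Set.range fun x => s(x, σ⁻¹ x)) = Set.range fun x => s(x, σ x) := by
  ext e
  constructor
  · rintro ⟨x, rfl⟩
    exact ⟨σ⁻¹ x, by simp [Sym2.eq_swap]⟩
  · rintro ⟨x, rfl⟩
    exact ⟨σ x, by simp [Sym2.eq_swap]⟩

end Equiv.Perm

namespace List

variable {α : Type*} [DecidableEq α] {l : List α}

theorem setOf_mem_zip_rotate_one (hl : l.Nodup) (hall : ∀ a, a ∈ l) :
    {p | p ∈ l.zip (l.rotate 1)} = Function.graph l.formPerm := by
  ext ⟨a, b⟩
  simp only [Set.mem_ofPred_eq, Function.graph, mem_iff_getElem]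
  constructor
  · rintro ⟨i, hi, hp⟩
    simp only [length_zip, length_rotate, min_self] at hi
    simp only [getElem_zip, getElem_rotate, Prod.mk.injEq] at hp
    rw [← hp.1, ← hp.2, formPerm_apply_getElem _ hl]
  · rintro rfl
    obtain ⟨i, hi, rfl⟩ := mem_iff_getElem.1 (hall a)
    exact ⟨i, by simpa using hi, by simp [getElem_rotate, formPerm_apply_getElem _ hl]⟩

theorem sameCycle_formPerm (hl : l.Nodup) {x y : α} (hx : x ∈ l) (hy : y ∈ l) :
    l.formPerm.SameCycle x y := by
  obtain ⟨i, hi, rfl⟩ := mem_iff_getElem.1 hx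
  obtain ⟨j, hj, rfl⟩ := mem_iff_getElem.1 hy
  refine ⟨(l.length - i + j : ℕ), ?_⟩
  rw [zpow_natCast, formPerm_pow_apply_getElem _ hl]
  congr 1
  rw [show i + (l.length - i + j) = l.length + j by omega, Nat.add_mod_left, Nat.mod_eq_of_lt hj]

end List

theorem Equiv.Perm.exists_formPerm_eq {α : Type*} [Fintype α] [DecidableEq α] {σ : Perm α}
    (hσ : ∀ x y, σ.SameCycle x y) (a : α) :
    ∃ l : List α, l ≠ [] ∧ l.Nodup ∧ (∀ x, x ∈ l) ∧ l.formPerm = σ := by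
  by_cases ha : σ a = a
  · have hσ1 : σ = 1 := ext fun y => (hσ a y).apply_eq_self_iff.1 ha
    refine ⟨[a], List.cons_ne_nil _ _, List.nodup_singleton a, fun y => ?_, ?_⟩
    · simpa [hσ1, sameCycle_one, eq_comm] using hσ a y
    · rw [List.formPerm_singleton, hσ1]
  · have hall : ∀ x, x ∈ σ.toList a := fun x => mem_toList_iff.2 ⟨hσ a x, mem_support.2 ha⟩
    refine ⟨σ.toList a, List.ne_nil_of_mem (hall a), nodup_toList σ a, hall, ?_⟩
    rw [formPerm_toList]
    exact IsCycle.cycleOf_eq ⟨a, ha, fun y _ => hσ a y⟩ ha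

theorem exists_list_iff_exists_perm {α : Type*} [Fintype α] [DecidableEq α]
    (P : Set (α × α) → Prop) :
    (∃ l : List α, l ≠ [] ∧ l.Nodup ∧ (∀ a, a ∈ l) ∧ P {p | p ∈ l.zip (l.rotate 1)}) ↔
      Nonempty α ∧ ∃ σ : Perm α, (∀ x y, σ.SameCycle x y) ∧ P (Function.graph σ) := by
  constructor
  · rintro ⟨l, hne, hl, hall, hP⟩
    refine ⟨⟨l.head hne⟩, l.formPerm, fun x y => l.sameCycle_formPerm hl (hall x) (hall y), ?_⟩
    rwa [← l.setOf_mem_zip_rotate_one hl hall]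
  · rintro ⟨⟨a⟩, σ, hσ, hP⟩
    obtain ⟨l, hne, hl, hall, rfl⟩ := σ.exists_formPerm_eq hσ a
    exact ⟨l, hne, hl, hall, by rwa [l.setOf_mem_zip_rotate_one hl hall]⟩

theorem isDHamCycle_iff {V : Type*} [Fintype V] {A C : Set (V × V)} :
    IsDHamCycle A C ↔ Nonempty V ∧ ∃ τ : Perm V, (∀ u v, τ.SameCycle u v) ∧
      (∀ v, (v, τ v) ∈ A) ∧ C = Function.graph τ := by
  classical
  refine (exists_list_iff_exists_perm fun S => C ⊆ A ∧ C = S).trans ?_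
  refine and_congr_right fun _ => exists_congr fun τ => and_congr_right fun _ => ?_
  constructor <;> rintro ⟨h, rfl⟩
  · exact ⟨fun v => h rfl, rfl⟩
  · exact ⟨by rintro ⟨u, w⟩ (rfl : τ u = w); exact h u, rfl⟩

theorem isUHamCycle_iff {W : Type*} [Fintype W] {E C : Set (Sym2 W)} :
    IsUHamCycle E C ↔ Nonempty W ∧ ∃ σ : Perm W, (∀ x y, σ.SameCycle x y) ∧
      (∀ x, s(x, σ x) ∈ E) ∧ C = Set.range fun x => s(x, σ x) := by
  classical
  have hmap (L : List (W × W)) :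
      {e | e ∈ L.map fun p => s(p.1, p.2)} = (fun p => s(p.1, p.2)) '' {p | p ∈ L} := by
    ext; simp
  simp only [IsUHamCycle, hmap]
  refine (exists_list_iff_exists_perm fun S => C ⊆ E ∧ C = (fun p => s(p.1, p.2)) '' S).trans ?_
  refine and_congr_right fun _ => exists_congr fun σ => and_congr_right fun _ => ?_
  have hrange :
      (fun p : W × W => s(p.1, p.2)) '' Function.graph σ = Set.range fun x => s(x, σ x) := by
    ext; simp [Function.graph]
  rw [hrange]
  constructor <;> rintro ⟨h, rfl⟩
  · exact ⟨Set.range_subset_iff.1 h, rfl⟩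
  · exact ⟨Set.range_subset_iff.2 h, rfl⟩

section Split

variable {V : Type*} {A : Set (V × V)}

theorem eq_of_mk_one_mem_tEdges {v : V} {y : V × Fin 3} (h : s((v, 1), y) ∈ tEdges A) :
    y = (v, 0) ∨ y = (v, 2) := by
  simp only [tEdges, Set.mem_ofPred_eq, Sym2.eq, Sym2.rel_iff', Prod.mk.injEq,
    Prod.swap_prod_mk] at h
  grind

theorem eq_of_mk_two_mem_tEdges {v : V} {y : V × Fin 3} (h : s((v, 2), y) ∈ tEdges A) :
    y = (v, 1) ∨ y.2 = 0 := by
  simp only [tEdges, Set.mem_ofPred_eq, Sym2.eq, Sym2.rel_iff', Prod.mk.injEq,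
    Prod.swap_prod_mk] at h
  grind

theorem mk_two_zero_mem_tEdges_iff {u w : V} :
    s((u, 2), (w, 0)) ∈ tEdges A ↔ (u, w) ∈ A := by
  simp [tEdges]

def splitPerm (τ : Perm V) : Perm (V × Fin 3) where
  toFun x := if x.2 = 2 then (τ x.1, 0) else (x.1, x.2 + 1)
  invFun x := if x.2 = 0 then (τ.symm x.1, 2) else (x.1, x.2 - 1)
  left_inv := by rintro ⟨v, i⟩; fin_cases i <;> simp
  right_inv := by rintro ⟨v, i⟩; fin_cases i <;> simp

section splitPerm

variable (τ : Perm V) (v : V)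

@[simp] theorem splitPerm_apply_zero : splitPerm τ (v, 0) = (v, 1) := by simp [splitPerm]

@[simp] theorem splitPerm_apply_one : splitPerm τ (v, 1) = (v, 2) := by simp [splitPerm]

@[simp] theorem splitPerm_apply_two : splitPerm τ (v, 2) = (τ v, 0) := by simp [splitPerm]

end splitPerm

theorem sym2Mk_splitPerm_mem_tEdges {τ : Perm V} (hA : ∀ v, (v, τ v) ∈ A) (x : V × Fin 3) :
    s(x, splitPerm τ x) ∈ tEdges A := by
  obtain ⟨v, i⟩ := x
  fin_cases i
  · exact Or.inl ⟨v, Or.inl (by simp)⟩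
  · exact Or.inl ⟨v, Or.inr (by simp)⟩
  · simpa [mk_two_zero_mem_tEdges_iff] using hA v

theorem sameCycle_splitPerm_iff [Finite V] {τ : Perm V} :
    (∀ x y, (splitPerm τ).SameCycle x y) ↔ ∀ u v, τ.SameCycle u v := by
  set π := splitPerm τ
  constructor
  · intro h u v
    refine (h (u, 0) (v, 0)).mem_of_mapsTo (s := {x : V × Fin 3 | τ.SameCycle u x.1}) ?_ (.refl τ u)
    rintro ⟨w, i⟩ (hw : τ.SameCycle u w)
    fin_cases i <;> simpa [π, Perm.sameCycle_apply_right] using hw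
  · intro h
    have hspine (v : V) : ∀ i, π.SameCycle (v, 0) (v, i) := by
      have h01 : π.SameCycle (v, 0) (v, 1) := by
        simpa [π] using (Perm.SameCycle.refl π (v, 0)).apply_right
      have h02 : π.SameCycle (v, 0) (v, 2) := by simpa [π] using h01.apply_right
      intro i
      fin_cases i
      exacts [.refl π _, h01, h02]
    have hnext (v : V) : π.SameCycle (v, 0) (τ v, 0) := by simpa [π] using (hspine v 2).apply_right
    have hin (u v : V) : π.SameCycle (u, 0) (v, 0) :=
      (h u v).mem_of_mapsTo (s := {w | π.SameCycle (u, 0) (w, 0)}) (fun w hw => hw.trans (hnext w))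
        (.refl π _)
    rintro ⟨u, i⟩ ⟨v, j⟩
    exact (hspine u i).symm.trans ((hin u v).trans (hspine v j))

variable {ρ : Perm (V × Fin 3)}

theorem apply_zero_eq_and_exists_apply_two_eq (hE : ∀ x, s(x, ρ x) ∈ tEdges A)
    (h2 : ∀ x, ρ (ρ x) ≠ x) {v : V} (hv : ρ (v, 1) = (v, 2)) :
    ρ (v, 0) = (v, 1) ∧ ∃ w, ρ (v, 2) = (w, 0) ∧ ρ (w, 1) = (w, 2) := by
  constructor
  · have hE' : s((v, 1), ρ⁻¹ (v, 1)) ∈ tEdges A := by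
      simpa [Sym2.eq_swap] using hE (ρ⁻¹ (v, 1))
    rcases eq_of_mk_one_mem_tEdges hE' with h | h
    · exact (Perm.inv_eq_iff_eq.1 h).symm
    · exact absurd (by rw [hv]; exact (Perm.inv_eq_iff_eq.1 h).symm) (h2 (v, 1))
  · rcases eq_of_mk_two_mem_tEdges (hE (v, 2)) with h | h
    · exact absurd (by rw [hv, h]) (h2 (v, 1))
    · set w := (ρ (v, 2)).1
      have hw : ρ (v, 2) = (w, 0) := Prod.ext rfl h
      refine ⟨w, hw, ?_⟩
      rcases eq_of_mk_one_mem_tEdges (hE (w, 1)) with h' | h'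
      · have : ((w, 1) : V × Fin 3) = (v, 2) := ρ.injective (h'.trans hw.symm)
        simp at this
      · exact h'

theorem exists_eq_splitPerm [Finite V] (hρ : ∀ x y, ρ.SameCycle x y)
    (hE : ∀ x, s(x, ρ x) ∈ tEdges A) (h2 : ∀ x, ρ (ρ x) ≠ x) {v₀ : V}
    (h₀ : ρ (v₀, 1) = (v₀, 2)) : ∃ τ : Perm V, ρ = splitPerm τ := by
  have hmid (v : V) : ρ (v, 1) = (v, 2) := by
    refine (hρ (v₀, 1) (v, 1)).mem_of_mapsTo (s := {x : V × Fin 3 | ρ (x.1, 1) = (x.1, 2)}) ?_ h₀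
    rintro ⟨v, i⟩ (hv : ρ (v, 1) = (v, 2))
    obtain ⟨h0, w, hw2, hw1⟩ := apply_zero_eq_and_exists_apply_two_eq hE h2 hv
    fin_cases i
    · simpa [h0] using hv
    · simp [hv]
    · simpa [hw2] using hw1
  choose f hf using fun v => (apply_zero_eq_and_exists_apply_two_eq hE h2 (hmid v)).2
  have hinj : Function.Injective f := fun u v huv =>
    congrArg Prod.fst (ρ.injective ((hf u).1.trans (huv ▸ (hf v).1.symm)))
  refine ⟨Equiv.ofBijective f (Finite.injective_iff_bijective.1 hinj), ?_⟩
  ext ⟨v, i⟩ : 1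
  fin_cases i
  · simp [(apply_zero_eq_and_exists_apply_two_eq hE h2 (hmid v)).1]
  · simp [hmid]
  · simp [(hf v).1]

theorem exists_eq_splitPerm_or_inv_eq_splitPerm [Fintype V] {σ : Perm (V × Fin 3)}
    (hσ : ∀ x y, σ.SameCycle x y) (hE : ∀ x, s(x, σ x) ∈ tEdges A) (v₀ : V) :
    ∃ τ : Perm V, σ = splitPerm τ ∨ σ⁻¹ = splitPerm τ := by
  have hcard : 2 < Fintype.card (V × Fin 3) := by
    have : 0 < Fintype.card V := Fintype.card_pos_iff.2 ⟨v₀⟩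
    simp only [Fintype.card_prod, Fintype.card_fin]
    omega
  have hσ' (x y : V × Fin 3) : σ⁻¹.SameCycle x y := Perm.sameCycle_inv.2 (hσ x y)
  have hE' : ∀ x, s(x, σ⁻¹ x) ∈ tEdges A :=
    Set.range_subset_iff.1 (σ.range_sym2Mk_inv ▸ Set.range_subset_iff.2 hE)
  rcases eq_of_mk_one_mem_tEdges (hE (v₀, 1)) with h | h
  · rcases eq_of_mk_one_mem_tEdges (hE' (v₀, 1)) with h' | h'
    · refine absurd ?_ (σ.apply_apply_ne_self hσ hcard (v₀, 1))
      rw [h]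
      exact (Perm.inv_eq_iff_eq.1 h').symm
    · exact (exists_eq_splitPerm hσ' hE' (Perm.apply_apply_ne_self hσ' hcard) h').imp
        fun _ => Or.inr
  · exact (exists_eq_splitPerm hσ hE (Perm.apply_apply_ne_self hσ hcard) h).imp fun _ => Or.inl

theorem isUHamCycle_tEdges_iff [Fintype V] {C' : Set (Sym2 (V × Fin 3))} :
    IsUHamCycle (tEdges A) C' ↔ Nonempty V ∧ ∃ τ : Perm V, (∀ u v, τ.SameCycle u v) ∧
      (∀ v, (v, τ v) ∈ A) ∧ C' = Set.range fun x => s(x, splitPerm τ x) := by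
  rw [isUHamCycle_iff]
  constructor
  · rintro ⟨⟨v₀, -⟩, σ, hσ, hE, rfl⟩
    obtain ⟨τ, hτ⟩ := exists_eq_splitPerm_or_inv_eq_splitPerm hσ hE v₀
    have hrange : (Set.range fun x => s(x, σ x)) = Set.range fun x => s(x, splitPerm τ x) := by
      rcases hτ with rfl | hτ
      · rfl
      · rw [← hτ, σ.range_sym2Mk_inv]
    have hτ_cyc : ∀ x y, (splitPerm τ).SameCycle x y := by
      rcases hτ with rfl | hτ
      exacts [hσ, fun x y => hτ ▸ Perm.sameCycle_inv.2 (hσ x y)]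
    refine ⟨⟨v₀⟩, τ, sameCycle_splitPerm_iff.1 hτ_cyc, fun v => ?_, hrange⟩
    rw [← mk_two_zero_mem_tEdges_iff, ← splitPerm_apply_two τ v]
    exact Set.range_subset_iff.2 hE (hrange ▸ ⟨(v, 2), rfl⟩)
  · rintro ⟨⟨v⟩, τ, hτ, hA, rfl⟩
    exact ⟨⟨(v, 0)⟩, splitPerm τ, sameCycle_splitPerm_iff.2 hτ,
      sym2Mk_splitPerm_mem_tEdges hA, rfl⟩

theorem setOf_crossEdge_mem_range_splitPerm {τ : Perm V} (hA : ∀ v, (v, τ v) ∈ A) :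
    {p : V × V | p ∈ A ∧ s((p.1, 2), (p.2, 0)) ∈ Set.range fun x => s(x, splitPerm τ x)} =
      Function.graph τ := by
  ext ⟨u, w⟩
  constructor
  · rintro ⟨-, ⟨v, i⟩, hx⟩
    fin_cases i <;> simp at hx
    obtain ⟨rfl, rfl⟩ := hx
    rfl
  · rintro (rfl : τ u = w)
    exact ⟨hA u, (u, 2), by simp⟩

theorem bijOn_setOf_crossEdge [Fintype V] :
    Set.BijOn
      (fun C' : Set (Sym2 (V × Fin 3)) =>
        {p : V × V | p ∈ A ∧ s((p.1, (2 : Fin 3)), (p.2, 0)) ∈ C'})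
      {C' | IsUHamCycle (tEdges A) C'} {C | IsDHamCycle A C} := by
  refine ⟨?_, ?_, ?_⟩
  · rintro C' hC'
    obtain ⟨hV, τ, hτ, hA, rfl⟩ := isUHamCycle_tEdges_iff.1 hC'
    exact isDHamCycle_iff.2 ⟨hV, τ, hτ, hA, setOf_crossEdge_mem_range_splitPerm hA⟩
  · rintro C₁ hC₁ C₂ hC₂ hC
    obtain ⟨-, τ₁, -, hA₁, rfl⟩ := isUHamCycle_tEdges_iff.1 hC₁
    obtain ⟨-, τ₂, -, hA₂, rfl⟩ := isUHamCycle_tEdges_iff.1 hC₂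
    simp only [setOf_crossEdge_mem_range_splitPerm hA₁, setOf_crossEdge_mem_range_splitPerm hA₂,
      Function.graph_inj, DFunLike.coe_fn_eq] at hC
    rw [hC]
  · rintro C hC
    obtain ⟨hV, τ, hτ, hA, rfl⟩ := isDHamCycle_iff.1 hC
    exact ⟨_, isUHamCycle_tEdges_iff.2 ⟨hV, τ, hτ, hA, rfl⟩, setOf_crossEdge_mem_range_splitPerm hA⟩

end Split

theorem stmt_13_general {V : Type*} [Fintype V]
    (A : Set (V × V)) :
    (∀ C', IsUHamCycle (tEdges A) C' →
      ∀ v : V, s((v, (0 : Fin 3)), (v, 1)) ∈ C' ∧ s((v, (1 : Fin 3)), (v, 2)) ∈ C') ∧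
    Set.BijOn
      (fun C' : Set (Sym2 (V × Fin 3)) =>
        {p : V × V | p ∈ A ∧ s((p.1, (2 : Fin 3)), (p.2, 0)) ∈ C'})
      {C' | IsUHamCycle (tEdges A) C'} {C | IsDHamCycle A C} ∧
    ((∃ C', IsUHamCycle (tEdges A) C') ↔ ∃ C, IsDHamCycle A C) := by
  have hbij := bijOn_setOf_crossEdge (A := A)
  refine ⟨fun C' hC' v => ?_, hbij, ⟨fun ⟨_, hC'⟩ => ⟨_, hbij.mapsTo hC'⟩, fun ⟨_, hC⟩ => ?_⟩⟩
  · obtain ⟨-, τ, -, -, rfl⟩ := isUHamCycle_tEdges_iff.1 hC'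
    exact ⟨⟨(v, 0), by simp⟩, ⟨(v, 1), by simp⟩⟩
  · obtain ⟨C', hC', -⟩ := hbij.surjOn hC
    exact ⟨C', hC'⟩

/-- for a loopless digraph `G = (V, A)` with `|V| ≥ 2`:
(i) every Hamiltonian cycle of `G'` contains all spine edges; (ii) the map
`C' ↦ {(u,w) ∈ A : {(u,out),(w,in)} ∈ C'}` is a bijection from the Hamiltonian cycles of
`G'` onto the Hamiltonian cycles of `G`; in particular (iii) `G'` has a Hamiltonian cycle
iff `G` does. -/
theorem stmt_13 {V : Type*} [Fintype V] (hV : 2 ≤ Fintype.card V)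
    (A : Set (V × V)) (hloop : ∀ v : V, (v, v) ∉ A) :
    (∀ C', IsUHamCycle (tEdges A) C' →
      ∀ v : V, s((v, (0 : Fin 3)), (v, 1)) ∈ C' ∧ s((v, (1 : Fin 3)), (v, 2)) ∈ C') ∧
    Set.BijOn
      (fun C' : Set (Sym2 (V × Fin 3)) =>
        {p : V × V | p ∈ A ∧ s((p.1, (2 : Fin 3)), (p.2, 0)) ∈ C'})
      {C' | IsUHamCycle (tEdges A) C'} {C | IsDHamCycle A C} ∧
    ((∃ C', IsUHamCycle (tEdges A) C') ↔ ∃ C, IsDHamCycle A C) :=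
  stmt_13_general A
end

section
/- Let φ be a CNF instance over variables X, let X_b ⊆ X, and let β = 2·|X \ X_b|. Let φ' be the CNF instance obtained from φ by adding, for each x ∈ X_b, fresh variables x^1,…,x^β and the 2β clauses {x, ¬x^i} and {¬x, x^i} for 1 ≤ i ≤ β. Then: (i) the satisfying literal sets of φ' are exactly the sets A ∪ {x^i : x ∈ A ∩ X_b, 1 ≤ i ≤ β} ∪ {¬x^i : ¬x ∈ A, x ∈ X_b, 1 ≤ i ≤ β} for A a satisfying literal set of φ (in particular φ' is satisfiable iff φ is); and (ii) for all satisfying literal sets S_1, S_2 of φ': S_1 and S_2 contain the same literals over variables in X_b if and only if |S_1 △ S_2| ≤ β, where △ denotes symmetric difference. -/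
/-- Variables of the blown-up CNF instance `φ'`: the original variables `X` together with
fresh variables `x^1, …, x^β` for every `x ∈ X_b`. -/
abbrev BVar (X : Type*) (Xb : Finset X) (β : ℕ) := X ⊕ ({x : X // x ∈ Xb} × Fin β)

/-- `A` is a satisfying literal set of the CNF instance with clause set `Φ` over the
variable type `V`: it contains exactly one of `x, ¬x` for each variable `x` and at least
one literal of each clause. -/
def SatAssign {V : Type*} (Φ : Set (Set (V × Bool))) (A : Set (V × Bool)) : Prop :=
  (∀ v : V, Xor' ((v, true) ∈ A) ((v, false) ∈ A)) ∧ ∀ c ∈ Φ, ∃ ℓ ∈ c, ℓ ∈ A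

/-- The embedding of literals over `X` into literals over the blown-up variable set. -/
def liftLit {X : Type*} {Xb : Finset X} {β : ℕ} (p : X × Bool) : BVar X Xb β × Bool :=
  (Sum.inl p.1, p.2)

/-- The clauses of `φ'`: the clauses of `φ` (with literals embedded), together with the
`2β` clauses `{x, ¬x^i}` and `{¬x, x^i}` for every `x ∈ X_b` and `1 ≤ i ≤ β`. -/
def blowCNF {X : Type*} (Xb : Finset X) (β : ℕ) (Φ : Set (Set (X × Bool))) :
    Set (Set (BVar X Xb β × Bool)) :=
  {c' | (∃ c ∈ Φ, c' = liftLit '' c) ∨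
        (∃ (x : {x : X // x ∈ Xb}) (i : Fin β),
          c' = {(Sum.inl x.1, true), (Sum.inr (x, i), false)} ∨
          c' = {(Sum.inl x.1, false), (Sum.inr (x, i), true)})}

/-- The satisfying literal set of `φ'` induced by a satisfying literal set `A` of `φ`:
`A ∪ {x^i : x ∈ A ∩ X_b, 1 ≤ i ≤ β} ∪ {¬x^i : ¬x ∈ A, x ∈ X_b, 1 ≤ i ≤ β}`. -/
def blowAssign {X : Type*} (Xb : Finset X) (β : ℕ) (A : Set (X × Bool)) :
    Set (BVar X Xb β × Bool) :=
  liftLit '' A ∪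
    {p | ∃ (x : {x : X // x ∈ Xb}) (i : Fin β), p.1 = Sum.inr (x, i) ∧ (x.1, p.2) ∈ A}

/-
The clauses `{x, ¬xⁱ}` and `{¬x, xⁱ}` force every copy `xⁱ` to take the value of `x`, so a
satisfying literal set of `φ'` is the blow-up of its restriction to `X`, and conversely every
blow-up of a satisfying literal set of `φ` satisfies `φ'`. If two such sets agree on `X_b`,
then they can differ only in the `2·|X \ X_b|` literals over `X \ X_b`. If they disagree on
some literal of a variable `x ∈ X_b`, they also disagree on the `β` corresponding literals of
the copies of `x`, which gives `β + 1` elements of the symmetric difference.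
-/

section Blowup

variable {X : Type*} {Xb : Finset X} {β : ℕ} {Φ : Set (Set (X × Bool))}

@[simp]
lemma mem_blowAssign_inl {A : Set (X × Bool)} {v : X} {b : Bool} :
    ((Sum.inl v, b) : BVar X Xb β × Bool) ∈ blowAssign Xb β A ↔ (v, b) ∈ A := by
  simp [blowAssign, liftLit]

@[simp]
lemma mem_blowAssign_inr {A : Set (X × Bool)} {x : {x : X // x ∈ Xb}} {i : Fin β} {b : Bool} :
    ((Sum.inr (x, i), b) : BVar X Xb β × Bool) ∈ blowAssign Xb β A ↔ (x.1, b) ∈ A := by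
  simp [blowAssign, liftLit]

lemma liftLit_injective : Function.Injective (liftLit : X × Bool → BVar X Xb β × Bool) := by
  rintro ⟨v, b⟩ ⟨w, c⟩ h
  simpa [liftLit] using h

lemma SatAssign.mem_copy_iff {S : Set (BVar X Xb β × Bool)} (hS : SatAssign (blowCNF Xb β Φ) S)
    (x : {x : X // x ∈ Xb}) (i : Fin β) (b : Bool) :
    ((Sum.inr (x, i), b) : BVar X Xb β × Bool) ∈ S ↔ (Sum.inl x.1, b) ∈ S := by
  have hx := hS.1 (Sum.inl x.1)
  have hxi := hS.1 (Sum.inr (x, i))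
  have hpos := hS.2 _ (Or.inr ⟨x, i, Or.inl rfl⟩)
  have hneg := hS.2 _ (Or.inr ⟨x, i, Or.inr rfl⟩)
  simp only [Set.mem_insert_iff, Set.mem_singleton_iff, exists_eq_or_imp, exists_eq_left]
    at hpos hneg
  rw [Xor', xor_iff_not_iff] at hx hxi
  cases b <;> tauto

lemma SatAssign.restrict {S : Set (BVar X Xb β × Bool)} (hS : SatAssign (blowCNF Xb β Φ) S) :
    SatAssign Φ {p | liftLit p ∈ S} := by
  refine ⟨fun v => hS.1 (Sum.inl v), fun c hc => ?_⟩
  obtain ⟨_, ⟨ℓ, hℓ, rfl⟩, hℓS⟩ := hS.2 _ (Or.inl ⟨c, hc, rfl⟩)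
  exact ⟨ℓ, hℓ, hℓS⟩

lemma SatAssign.eq_blowAssign_restrict {S : Set (BVar X Xb β × Bool)}
    (hS : SatAssign (blowCNF Xb β Φ) S) : S = blowAssign Xb β {p | liftLit p ∈ S} := by
  ext ⟨v | ⟨x, i⟩, b⟩
  · rw [mem_blowAssign_inl]; rfl
  · rw [mem_blowAssign_inr, hS.mem_copy_iff x i b]; rfl

lemma SatAssign.blowAssign {A : Set (X × Bool)} (hA : SatAssign Φ A) :
    SatAssign (blowCNF Xb β Φ) (blowAssign Xb β A) := by
  refine ⟨fun | Sum.inl v => by simpa using hA.1 v | Sum.inr (x, _) => by simpa using hA.1 x.1, ?_⟩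
  rintro c (⟨c₀, hc₀, rfl⟩ | ⟨x, i, rfl | rfl⟩)
  · obtain ⟨ℓ, hℓ, hℓA⟩ := hA.2 c₀ hc₀
    exact ⟨liftLit ℓ, ⟨ℓ, hℓ, rfl⟩, Or.inl ⟨ℓ, hℓA, rfl⟩⟩
  all_goals
    rcases hA.1 x.1 with ⟨ht, -⟩ | ⟨hf, -⟩
    all_goals simp_all

lemma satAssign_blowCNF_iff {S : Set (BVar X Xb β × Bool)} :
    SatAssign (blowCNF Xb β Φ) S ↔ ∃ A, SatAssign Φ A ∧ S = blowAssign Xb β A :=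
  ⟨fun hS => ⟨_, hS.restrict, hS.eq_blowAssign_restrict⟩,
    by rintro ⟨A, hA, rfl⟩; exact hA.blowAssign⟩

lemma inter_baseLits_eq_iff {S₁ S₂ : Set (BVar X Xb β × Bool)} :
    S₁ ∩ {p | ∃ x ∈ Xb, p.1 = Sum.inl x} = S₂ ∩ {p | ∃ x ∈ Xb, p.1 = Sum.inl x} ↔
      ∀ x ∈ Xb, ∀ b, ((Sum.inl x, b) ∈ S₁ ↔ (Sum.inl x, b) ∈ S₂) := by
  refine ⟨fun h x hx b => ?_, fun h => ?_⟩
  · simpa [hx] using Set.ext_iff.mp h (Sum.inl x, b)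
  · ext ⟨w, b⟩
    constructor <;> rintro ⟨hw, x, hx, rfl⟩
    exacts [⟨(h x hx b).1 hw, x, hx, rfl⟩, ⟨(h x hx b).2 hw, x, hx, rfl⟩]

lemma symmDiff_subset_liftLit_image_compl {S₁ S₂ : Set (BVar X Xb β × Bool)}
    (h₁ : SatAssign (blowCNF Xb β Φ) S₁) (h₂ : SatAssign (blowCNF Xb β Φ) S₂)
    (hagree : ∀ x ∈ Xb, ∀ b, ((Sum.inl x, b) ∈ S₁ ↔ (Sum.inl x, b) ∈ S₂)) :
    symmDiff S₁ S₂ ⊆ liftLit '' {q | q.1 ∉ Xb} := by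
  rintro ⟨v | ⟨x, i⟩, b⟩ hp <;> rw [Set.mem_symmDiff] at hp
  · refine ⟨(v, b), fun hv => ?_, rfl⟩
    have := hagree v hv b
    tauto
  · have := hagree x.1 x.2 b
    rw [h₁.mem_copy_iff, h₂.mem_copy_iff] at hp
    tauto

lemma ncard_liftLit_image_compl [Fintype X] [DecidableEq X] :
    (liftLit '' {q : X × Bool | q.1 ∉ Xb} : Set (BVar X Xb β × Bool)).ncard =
      2 * (Finset.univ \ Xb).card := by
  have : {q : X × Bool | q.1 ∉ Xb} = ↑((Finset.univ \ Xb) ×ˢ (Finset.univ : Finset Bool)) := by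
    ext; simp
  rw [Set.ncard_image_of_injective _ liftLit_injective, this, Set.ncard_coe_finset,
    Finset.card_product, Finset.card_univ, Fintype.card_bool, mul_comm]

lemma lt_ncard_symmDiff [Finite X] {S₁ S₂ : Set (BVar X Xb β × Bool)}
    (h₁ : SatAssign (blowCNF Xb β Φ) S₁) (h₂ : SatAssign (blowCNF Xb β Φ) S₂)
    {x : X} (hx : x ∈ Xb) {b : Bool} (hne : ¬((Sum.inl x, b) ∈ S₁ ↔ (Sum.inl x, b) ∈ S₂)) :
    β < (symmDiff S₁ S₂).ncard := by
  set copies : Fin β → BVar X Xb β × Bool := fun i => (Sum.inr (⟨x, hx⟩, i), b)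
  have hcopies : Function.Injective copies := fun i j h => by simpa [copies] using h
  have hsub : insert (Sum.inl x, b) (Set.range copies) ⊆ symmDiff S₁ S₂ := by
    rintro _ (rfl | ⟨i, rfl⟩) <;> rw [Set.mem_symmDiff]
    · tauto
    · rw [h₁.mem_copy_iff, h₂.mem_copy_iff]
      tauto
  calc β = (Set.range copies).ncard := by rw [Set.ncard_range_of_injective hcopies, Nat.card_fin]
    _ < (insert (Sum.inl x, b) (Set.range copies)).ncard :=
        Set.ncard_lt_ncard (Set.ssubset_insert (by simp [copies])) (Set.toFinite _)
    _ ≤ (symmDiff S₁ S₂).ncard := Set.ncard_le_ncard hsub (Set.toFinite _)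

end Blowup

/-- with `β = 2·|X \ X_b|`:
(i) the satisfying literal sets of `φ'` are exactly the blow-ups of the satisfying literal
sets of `φ` (in particular `φ'` is satisfiable iff `φ` is); and
(ii) two satisfying literal sets of `φ'` contain the same literals over the variables of
`X_b` iff `|S₁ ∆ S₂| ≤ β`. -/
theorem stmt_18 {X : Type*} [Fintype X] [DecidableEq X] (Xb : Finset X)
    (Φ : Set (Set (X × Bool))) (β : ℕ) (hβ : β = 2 * (Finset.univ \ Xb).card) :
    ({A' : Set (BVar X Xb β × Bool) | SatAssign (blowCNF Xb β Φ) A'}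
      = {A' | ∃ A, SatAssign Φ A ∧ A' = blowAssign Xb β A}) ∧
    ((∃ A', SatAssign (blowCNF Xb β Φ) A') ↔ ∃ A, SatAssign Φ A) ∧
    (∀ S₁ S₂ : Set (BVar X Xb β × Bool),
      SatAssign (blowCNF Xb β Φ) S₁ → SatAssign (blowCNF Xb β Φ) S₂ →
      (S₁ ∩ {p | ∃ x ∈ Xb, p.1 = Sum.inl x} = S₂ ∩ {p | ∃ x ∈ Xb, p.1 = Sum.inl x}
        ↔ (symmDiff S₁ S₂).ncard ≤ β)) := by
  refine ⟨Set.ext fun _ => satAssign_blowCNF_iff, ⟨?_, ?_⟩, fun S₁ S₂ h₁ h₂ => ?_⟩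
  · rintro ⟨_, hS⟩
    exact ⟨_, hS.restrict⟩
  · rintro ⟨A, hA⟩
    exact ⟨_, hA.blowAssign⟩
  rw [inter_baseLits_eq_iff]
  constructor
  · intro hagree
    calc (symmDiff S₁ S₂).ncard
        ≤ (liftLit '' {q : X × Bool | q.1 ∉ Xb} : Set (BVar X Xb β × Bool)).ncard :=
          Set.ncard_le_ncard (symmDiff_subset_liftLit_image_compl h₁ h₂ hagree) (Set.toFinite _)
      _ = β := by rw [ncard_liftLit_image_compl, hβ]
  · intro hcard x hx b
    by_contra hne
    exact (lt_ncard_symmDiff h₁ h₂ hx hne).not_ge hcard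
end
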